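/- arXiv:2501.11789 — 6 statements merged into one kernel-verified Lean document; each statement's English description precedes it below -/
import Mathlib

section
/- Let A be an m × n matrix over ℤ. Exactly one of the following holds: (1) there exists x ∈ ℤⁿ with every coordinate of x positive and every coordinate of Ax at most 0; (2) there exists y ∈ ℤᵐ with every coordinate of y nonnegative such that every coordinate of Aᵀy is nonnegative and Aᵀy ≠ 0. -/
/-!
Over an ordered field the alternative follows from Farkas' lemma applied to the homogenised
system `A x ≤ 0`, `x ≥ τ • 1`, `τ > 0`, whose Farkas certificate is a pair `y ≥ 0`, `w ≥ 0`
with `Aᵀ y = w` and `∑ w = 1`. Farkas' lemma is proved by induction on the number of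
generators: if a functional `f` separates `b` from the old generators but `f w < 0` for the
new generator `w`, project along `w` onto `ker f` and apply the induction hypothesis to the
projected configuration. Both alternatives are invariant under positive scaling, so clearing
denominators passes from `ℚ` to `ℤ`; they exclude each other because `y ⬝ᵥ A x` would be both
`≤ 0` and `> 0`.
-/

theorem PointedCone.mem_hull_image_or_exists_dual_neg {ι K M : Type*} [Field K]
    [LinearOrder K] [IsStrictOrderedRing K] [AddCommGroup M] [Module K M]
    (s : Finset ι) (v : ι → M) (b : M) :
    b ∈ hull K (v '' s) ∨ ∃ f : Module.Dual K M, (∀ i ∈ s, 0 ≤ f (v i)) ∧ f b < 0 := by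
  classical
  induction s using Finset.induction_on generalizing v b with
  | empty =>
    by_cases hb : b = 0
    · exact .inl (hb ▸ zero_mem _)
    obtain ⟨f, hf⟩ := Module.Projective.exists_dual_ne_zero K hb
    rcases hf.lt_or_gt with h | h
    exacts [.inr ⟨f, by simp, h⟩, .inr ⟨-f, by simp, by simpa⟩]
  | @insert a s ha ih =>
    rw [Finset.coe_insert, Set.image_insert_eq]
    rcases ih v b with hb | ⟨y, hy, hyb⟩
    · exact .inl (Submodule.span_mono (Set.subset_insert _ _) hb)
    by_cases hya : 0 ≤ y (v a)
    · exact .inr ⟨y, Finset.forall_mem_insert _ _ _ |>.2 ⟨hya, hy⟩, hyb⟩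
    replace hya := not_le.1 hya
    let P : M →ₗ[K] M := LinearMap.id - ((y (v a))⁻¹ • y).smulRight (v a)
    have hP : ∀ u, u - P u = (y u / y (v a)) • v a := fun u => by
      simp [P, div_eq_inv_mul]
    have hPa : P (v a) = 0 := by
      rw [← sub_eq_self, hP, div_self hya.ne, one_smul]
    rcases ih (P ∘ v) (P b) with hPb | ⟨z, hz, hzb⟩
    · rw [Set.image_comp] at hPb
      obtain ⟨u, hu, hPu⟩ : ∃ u ∈ hull K (v '' s), P u = P b := by
        rwa [← PointedCone.mem_map, PointedCone.map, ← Submodule.span_image]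
      have hyu : 0 ≤ y u := by
        refine Submodule.span_le (p := (PointedCone.positive K K).comap y) |>.2 ?_ hu
        rintro - ⟨i, hi, rfl⟩
        exact hy i hi
      have hb : b = (y (b - u) / y (v a)) • v a + u := by
        rw [← hP, map_sub, sub_eq_zero.2 hPu.symm]
        simp
      have hcoef : 0 ≤ y (b - u) / y (v a) :=
        div_nonneg_of_nonpos (by rw [map_sub]; linarith) hya.le
      exact .inl (Submodule.mem_span_insert.2 ⟨⟨_, hcoef⟩, u, hu, hb⟩)
    · exact .inr ⟨z ∘ₗ P, Finset.forall_mem_insert _ _ _ |>.2 ⟨by simp [hPa], hz⟩, hzb⟩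

theorem exists_pos_nat_mul_eq_intCast {ι : Type*} [Fintype ι] (v : ι → ℚ) :
    ∃ d : ℕ, 0 < d ∧ ∃ z : ι → ℤ, ∀ i, (z i : ℚ) = d * v i := by
  refine ⟨∏ i, (v i).den, Finset.prod_pos fun i _ => (v i).den_pos,
    fun i => (v i).num * ((∏ k, (v k).den) / (v i).den : ℕ), fun i => ?_⟩
  have hdvd : (v i).den ∣ ∏ k, (v k).den := Finset.dvd_prod_of_mem _ (Finset.mem_univ i)
  rw [Int.cast_mul, Int.cast_natCast, Nat.cast_div hdvd (by positivity), ← Rat.mul_den_eq_num]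
  field_simp

namespace Matrix

variable {m n : Type*}

theorem intCast_mulVec_eq_mul [Fintype n] (A : Matrix m n ℤ) {z : n → ℤ} {x : n → ℚ}
    {d : ℚ} (hz : ∀ j, (z j : ℚ) = d * x j) (i : m) :
    ((A *ᵥ z) i : ℚ) = d * (A.map (Int.cast : ℤ → ℚ) *ᵥ x) i := by
  have := (Int.castRingHom ℚ).map_mulVec A z i
  simp only [Int.coe_castRingHom] at this
  rw [this, show (Int.cast ∘ z : n → ℚ) = d • x from funext hz, mulVec_smul]
  rfl

theorem exists_nonneg_mulVec_eq_or_exists_vecMul_nonneg_dotProduct_neg [Fintype m]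
    [Fintype n] {K : Type*} [Field K] [LinearOrder K] [IsStrictOrderedRing K]
    (B : Matrix m n K) (b : m → K) :
    (∃ c, 0 ≤ c ∧ B *ᵥ c = b) ∨ ∃ y, 0 ≤ y ᵥ* B ∧ y ⬝ᵥ b < 0 := by
  classical
  rcases PointedCone.mem_hull_image_or_exists_dual_neg (K := K) Finset.univ (fun j i => B i j) b
    with hb | ⟨f, hf, hfb⟩
  · rw [Finset.coe_univ, Set.image_univ, Submodule.mem_span_range_iff_exists_fun] at hb
    obtain ⟨c, hc⟩ := hb
    refine .inl ⟨fun j => c j, fun j => (c j).2, ?_⟩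
    rw [← hc, mulVec_eq_sum]
    simp only [op_smul_eq_smul]
    rfl
  · let y := (dotProductEquiv K m).symm f
    have hy : ∀ u, y ⬝ᵥ u = f u := fun u => by
      rw [← dotProductEquiv_apply_apply, LinearEquiv.apply_symm_apply]
    refine .inr ⟨y, fun j => ?_, (hy b).symm ▸ hfb⟩
    change 0 ≤ y ⬝ᵥ fun i => B i j
    exact (hy _).symm ▸ hf j (Finset.mem_univ j)

section Alternative

variable {R : Type*}

def ExistsPosMulVecNonpos [Fintype n] [Semiring R] [PartialOrder R] (A : Matrix m n R) : Prop :=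
  ∃ x : n → R, (∀ j, 0 < x j) ∧ ∀ i, A.mulVec x i ≤ 0

def ExistsNonnegTransposeMulVecSemipos [Fintype m] [Semiring R] [PartialOrder R]
    (A : Matrix m n R) : Prop :=
  ∃ y : m → R, (∀ i, 0 ≤ y i) ∧ (∀ j, 0 ≤ A.transpose.mulVec y j) ∧ A.transpose.mulVec y ≠ 0

theorem not_existsPosMulVecNonpos_and_existsNonnegTransposeMulVecSemipos [Fintype m]
    [Fintype n] [CommSemiring R] [PartialOrder R] [IsStrictOrderedRing R] (A : Matrix m n R) :
    ¬(A.ExistsPosMulVecNonpos ∧ A.ExistsNonnegTransposeMulVecSemipos) := by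
  rintro ⟨⟨x, hx, hAx⟩, ⟨y, hy, hAy, hAy0⟩⟩
  obtain ⟨j, hj⟩ : ∃ j, (Aᵀ *ᵥ y) j ≠ 0 := Function.ne_iff.1 hAy0
  have hpos : 0 < (Aᵀ *ᵥ y) ⬝ᵥ x :=
    Finset.sum_pos' (fun k _ => mul_nonneg (hAy k) (hx k).le)
      ⟨j, Finset.mem_univ j, mul_pos ((hAy j).lt_of_ne' hj) (hx j)⟩
  have hnonpos : y ⬝ᵥ (A *ᵥ x) ≤ 0 :=
    Finset.sum_nonpos fun i _ => mul_nonpos_of_nonneg_of_nonpos (hy i) (hAx i)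
  rw [dotProduct_mulVec, ← mulVec_transpose] at hnonpos
  exact hnonpos.not_gt hpos

theorem existsPosMulVecNonpos_or_existsNonnegTransposeMulVecSemipos [Fintype m] [Fintype n]
    [Field R] [LinearOrder R] [IsStrictOrderedRing R] (A : Matrix m n R) :
    A.ExistsPosMulVecNonpos ∨ A.ExistsNonnegTransposeMulVecSemipos := by
  classical
  -- For `y = (x, τ)`, `0 ≤ y ᵥ* B` says `A x ≤ 0` and `x ≥ τ • 1`, and `y ⬝ᵥ b < 0` says
  -- `τ > 0`; for `c = (u, w)`, `B *ᵥ c = b` says `Aᵀ u = w` and `∑ w = 1`.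
  let B : Matrix (n ⊕ Unit) (m ⊕ n) R := fromBlocks (-Aᵀ) 1 0 (-of fun _ _ => 1)
  let b : n ⊕ Unit → R := Sum.elim 0 (-1)
  rcases exists_nonneg_mulVec_eq_or_exists_vecMul_nonneg_dotProduct_neg B b with
    ⟨c, hc, hcb⟩ | ⟨y, hy, hyb⟩
  · have hw : ∀ j, (Aᵀ *ᵥ (c ∘ Sum.inl)) j = c (Sum.inr j) := fun j => by
      have := congrFun hcb (Sum.inl j)
      simp [B, b, fromBlocks_mulVec, neg_mulVec] at this
      linarith
    have hsum : ∑ j, c (Sum.inr j) = 1 := by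
      simpa [B, b, fromBlocks_mulVec, mulVec, dotProduct] using congrFun hcb (Sum.inr ())
    refine .inr ⟨c ∘ Sum.inl, fun i => hc _, fun j => (hw j).symm ▸ hc _, fun h => ?_⟩
    simp [← hw, h] at hsum
  · have hτ : 0 < y (Sum.inr ()) := by
      simpa [b, dotProduct] using hyb
    refine .inl ⟨y ∘ Sum.inl, fun j => ?_, fun i => ?_⟩
    · have := hy (Sum.inr j)
      simp only [B, vecMul_fromBlocks, vecMul_one] at this
      simp [vecMul, dotProduct] at this
      simp only [Function.comp_apply]
      linarith
    · simpa [B, vecMul_fromBlocks, vecMul_neg, vecMul_transpose] using hy (Sum.inl i)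

theorem ExistsPosMulVecNonpos.of_map_intCast [Fintype n] {A : Matrix m n ℤ}
    (h : (A.map (Int.cast : ℤ → ℚ)).ExistsPosMulVecNonpos) : A.ExistsPosMulVecNonpos := by
  obtain ⟨x, hx, hAx⟩ := h
  obtain ⟨d, hd, z, hz⟩ := exists_pos_nat_mul_eq_intCast x
  replace hd : (0 : ℚ) < d := Nat.cast_pos.2 hd
  refine ⟨z, fun j => (Int.cast_pos (R := ℚ)).1 ?_, fun i => (Int.cast_nonpos (R := ℚ)).1 ?_⟩
  · rw [hz]
    exact mul_pos hd (hx j)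
  · rw [intCast_mulVec_eq_mul A hz]
    exact mul_nonpos_of_nonneg_of_nonpos hd.le (hAx i)

theorem ExistsNonnegTransposeMulVecSemipos.of_map_intCast [Fintype m] {A : Matrix m n ℤ}
    (h : (A.map (Int.cast : ℤ → ℚ)).ExistsNonnegTransposeMulVecSemipos) :
    A.ExistsNonnegTransposeMulVecSemipos := by
  obtain ⟨y, hy, hAy, hAy0⟩ := h
  obtain ⟨d, hd, z, hz⟩ := exists_pos_nat_mul_eq_intCast y
  replace hd : (0 : ℚ) < d := Nat.cast_pos.2 hd
  have hAz := intCast_mulVec_eq_mul Aᵀ hz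
  rw [transpose_map] at hAz
  refine ⟨z, fun i => (Int.cast_nonneg_iff (R := ℚ)).1 ?_,
    fun j => (Int.cast_nonneg_iff (R := ℚ)).1 ?_, fun h0 => hAy0 (funext fun j => ?_)⟩
  · rw [hz]
    exact mul_nonneg hd.le (hy i)
  · rw [hAz]
    exact mul_nonneg hd.le (hAy j)
  · simpa [h0, hd.ne'] using (hAz j).symm

end Alternative

end Matrix

/-- **Lemma (theorem of the alternative over ℤ).**
Let `A` be an `m × n` matrix over `ℤ`. Exactly one of the following holds:
(1) for some `x ∈ ℤⁿ` with `x > 0` (coordinate-wise), `A x ≤ 0`;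
(2) for some `y ∈ ℤᵐ` with `y ≥ 0`, `Aᵀ y ≩ 0` (i.e. `Aᵀ y ≥ 0` and `Aᵀ y ≠ 0`). -/
theorem alternative_int (m n : ℕ) (A : Matrix (Fin m) (Fin n) ℤ) :
    Xor'
      (∃ x : Fin n → ℤ, (∀ j, 0 < x j) ∧ ∀ i, A.mulVec x i ≤ 0)
      (∃ y : Fin m → ℤ, (∀ i, 0 ≤ y i) ∧
        (∀ j, 0 ≤ A.transpose.mulVec y j) ∧ A.transpose.mulVec y ≠ 0) := by
  refine (xor_iff_or_and_not_and _ _).2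
    ⟨?_, A.not_existsPosMulVecNonpos_and_existsNonnegTransposeMulVecSemipos⟩
  rcases (A.map (Int.cast : ℤ → ℚ)).existsPosMulVecNonpos_or_existsNonnegTransposeMulVecSemipos
    with h | h
  exacts [.inl h.of_map_intCast, .inr h.of_map_intCast]
end

section
/- Let A and B be m × n matrices over ℕ. Exactly one of the following holds: (1) there exists x ∈ ℕⁿ with every coordinate of x positive such that Ax ≤ Bx coordinate-wise; (2) there exists y ∈ ℕᵐ such that Aᵀy ≥ Bᵀy coordinate-wise and Aᵀy ≠ Bᵀy. -/
/-!
Over `ℚ` the dichotomy is a theorem of the alternative of Stiemke type: either `(B - A) x ≥ 0`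
for some `x ≥ 1`, or `yᵀ (B - A) < 0` for some `y ≥ 0`. It follows from the inhomogeneous Farkas
lemma applied to the stacked system `-(B - A) x ≤ 0`, `-x ≤ -1`, and the Farkas lemma is proved
by Fourier–Motzkin elimination of one variable at a time. Both alternatives are invariant under
positive scaling, so clearing denominators transports them to `ℕ`. They cannot hold together,
since `(yᵀ B) x < (yᵀ A) x = yᵀ (A x) ≤ yᵀ (B x) = (yᵀ B) x`.
-/

open Matrix

section OneVariable

variable {K ι : Type*} [Field K] [LinearOrder K] [IsStrictOrderedRing K]

theorem exists_forall_mul_le [Finite ι] {c r : ι → K} (hzero : ∀ i, c i = 0 → 0 ≤ r i)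
    (hpair : ∀ p q, 0 < c p → c q < 0 → c q * r p ≤ c p * r q) :
    ∃ t, ∀ i, c i * t ≤ r i := by
  by_cases hneg : ∃ q, c q < 0
  · obtain ⟨q, hq, hmax⟩ := Set.exists_max_image {q | c q < 0} (fun q => r q / c q)
      (Set.toFinite _) hneg
    refine ⟨r q / c q, fun i => ?_⟩
    rcases lt_trichotomy (c i) 0 with hi | hi | hi
    · rw [mul_comm]
      exact (div_le_iff_of_neg hi).1 (hmax i hi)
    · simpa [hi] using hzero i hi
    · rw [mul_div_assoc', div_le_iff_of_neg hq]
      linarith [hpair i q hi hq]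
  · push Not at hneg
    obtain ⟨t, ht⟩ := (Set.finite_range fun i => r i / c i).bddBelow
    refine ⟨t, fun i => ?_⟩
    rcases (hneg i).eq_or_lt with hi | hi
    · simpa [← hi] using hzero i hi.symm
    · rw [mul_comm, ← le_div_iff₀ hi]
      exact ht ⟨i, rfl⟩

end OneVariable

section Elimination

variable {K ι : Type*} [Field K] [LinearOrder K] [DecidableEq ι]

-- Fourier–Motzkin elimination of the variable with coefficient column `c`: in each pair of rows
-- with `c p > 0 > c q`, the nonnegative weights `-c q` and `c p` cancel it.
def eliminationMatrix (c : ι → K) :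
    Matrix ({i // c i = 0} ⊕ {i // 0 < c i} × {i // c i < 0}) ι K :=
  of <| Sum.elim (fun z => Pi.single z.1 1)
    fun pq => -c pq.2 • Pi.single pq.1.1 1 + c pq.1 • Pi.single pq.2.1 1

lemma eliminationMatrix_nonneg [IsStrictOrderedRing K] (c : ι → K) (k i) :
    0 ≤ eliminationMatrix c k i := by
  rcases k with z | ⟨p, q⟩
  · simp only [eliminationMatrix, of_apply, Sum.elim_inl, Pi.single_apply]
    split_ifs <;> norm_num
  · simp only [eliminationMatrix, of_apply, Sum.elim_inr, Pi.add_apply, Pi.smul_apply,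
      Pi.single_apply, smul_eq_mul]
    have := p.2; have := q.2
    split_ifs <;> nlinarith

variable [Fintype ι] (c : ι → K)

@[simp]
lemma eliminationMatrix_mulVec_inl (v : ι → K) (z : {i // c i = 0}) :
    (eliminationMatrix c *ᵥ v) (.inl z) = v z := by
  simp [eliminationMatrix, mulVec]

@[simp]
lemma eliminationMatrix_mulVec_inr (v : ι → K) (p : {i // 0 < c i}) (q : {i // c i < 0}) :
    (eliminationMatrix c *ᵥ v) (.inr (p, q)) = -c q * v p + c p * v q := by
  change (-c q • Pi.single p.1 1 + c p • Pi.single q.1 1 : ι → K) ⬝ᵥ v = _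
  simp [add_dotProduct]

lemma eliminationMatrix_mulVec_self : eliminationMatrix c *ᵥ c = 0 := by
  ext (z | ⟨p, q⟩)
  · simpa using z.2
  · rw [eliminationMatrix_mulVec_inr, Pi.zero_apply]
    ring

lemma exists_forall_mul_le_of_nonneg_eliminationMatrix_mulVec [IsStrictOrderedRing K]
    {r : ι → K} (hr : 0 ≤ eliminationMatrix c *ᵥ r) : ∃ t, ∀ i, c i * t ≤ r i :=
  exists_forall_mul_le (fun i hi => by simpa using hr (.inl ⟨i, hi⟩)) fun p q hp hq => by
    have := hr (.inr (⟨p, hp⟩, ⟨q, hq⟩))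
    rw [Pi.zero_apply, eliminationMatrix_mulVec_inr] at this
    linarith

end Elimination

lemma mulVec_snoc_apply {R ι : Type*} [Fintype ι] [NonUnitalNonAssocSemiring R] {n : ℕ}
    (A : Matrix ι (Fin (n + 1)) R) (x : Fin n → R) (t : R) (i : ι) :
    (A *ᵥ Fin.snoc x t) i = (A.submatrix id Fin.castSucc *ᵥ x) i + A i (Fin.last n) * t := by
  simp [mulVec, dotProduct, Fin.sum_univ_castSucc]

section Farkas

variable {K ι : Type*} [Field K] [LinearOrder K] [IsStrictOrderedRing K] [Fintype ι]

theorem exists_mulVec_le_or_exists_vecMul_eq_zero_of_fin {n : ℕ} (A : Matrix ι (Fin n) K)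
    (b : ι → K) : (∃ x, A *ᵥ x ≤ b) ∨ ∃ y, 0 ≤ y ∧ y ᵥ* A = 0 ∧ y ⬝ᵥ b < 0 := by
  classical
  induction n generalizing ι with
  | zero =>
    by_cases hb : 0 ≤ b
    · exact .inl ⟨0, by simpa using hb⟩
    · obtain ⟨i, hi⟩ := not_forall.1 hb
      exact .inr ⟨Pi.single i 1, Pi.single_nonneg.2 zero_le_one, Subsingleton.elim _ _,
        by simpa using not_le.1 hi⟩
  | succ n ih =>
    set c := Aᵀ (Fin.last n)
    set A' := A.submatrix id Fin.castSucc
    set W := eliminationMatrix c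
    rcases ih (W * A') (W *ᵥ b) with ⟨x', hx'⟩ | ⟨y', hy', hyA, hyb⟩
    · have hr : 0 ≤ W *ᵥ (b - A' *ᵥ x') := by
        rw [mulVec_sub, mulVec_mulVec]
        exact sub_nonneg.2 hx'
      obtain ⟨t, ht⟩ := exists_forall_mul_le_of_nonneg_eliminationMatrix_mulVec c hr
      refine .inl ⟨Fin.snoc x' t, fun i => ?_⟩
      have := ht i
      rw [mulVec_snoc_apply]
      change A i (Fin.last n) * t ≤ b i - (A' *ᵥ x') i at this
      linarith
    · refine .inr ⟨y' ᵥ* W, fun i => dotProduct_nonneg_of_nonneg hy' fun k =>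
        eliminationMatrix_nonneg c k i, ?_, by rwa [← dotProduct_mulVec]⟩
      ext j
      induction j using Fin.lastCases with
      | last =>
        change (y' ᵥ* W) ⬝ᵥ c = 0
        rw [← dotProduct_mulVec, eliminationMatrix_mulVec_self, dotProduct_zero]
      | cast j =>
        change (y' ᵥ* W ᵥ* A') j = 0
        rw [vecMul_vecMul, hyA, Pi.zero_apply]

theorem exists_mulVec_le_or_exists_vecMul_eq_zero {η : Type*} [Fintype η] (A : Matrix ι η K)
    (b : ι → K) : (∃ x, A *ᵥ x ≤ b) ∨ ∃ y, 0 ≤ y ∧ y ᵥ* A = 0 ∧ y ⬝ᵥ b < 0 := by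
  let e := Fintype.equivFin η
  rcases exists_mulVec_le_or_exists_vecMul_eq_zero_of_fin (A.submatrix id e.symm) b with
    ⟨x, hx⟩ | ⟨y, hy, hyA, hyb⟩
  · exact .inl ⟨x ∘ e, by simpa [submatrix_mulVec_equiv] using hx⟩
  · refine .inr ⟨y, hy, funext fun j => ?_, hyb⟩
    simpa [vecMul, dotProduct] using congrFun hyA (e j)

theorem exists_one_le_nonneg_mulVec_or_exists_vecMul_neg {η : Type*} [Fintype η]
    (M : Matrix ι η K) : (∃ x, 1 ≤ x ∧ 0 ≤ M *ᵥ x) ∨ ∃ y, 0 ≤ y ∧ y ᵥ* M < 0 := by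
  classical
  rcases exists_mulVec_le_or_exists_vecMul_eq_zero (fromRows (-M) (-1 : Matrix η η K))
      (Sum.elim 0 (-1)) with
    ⟨x, hx⟩ | ⟨y, hy, hyM, hyb⟩
  · refine .inl ⟨x, fun j => ?_, fun i => ?_⟩
    · simpa [neg_mulVec] using hx (.inr j)
    · simpa [neg_mulVec] using hx (.inl i)
  · refine .inr ⟨y ∘ Sum.inl, fun i => hy _, ?_⟩
    rw [vecMul_fromRows, vecMul_neg, vecMul_neg, vecMul_one, neg_add_eq_zero] at hyM
    rw [hyM, neg_lt_zero]
    refine lt_of_le_of_ne (fun j => hy _) fun h => ?_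
    rw [← Sum.elim_comp_inl_inr y, sumElim_dotProduct_sumElim, ← h] at hyb
    simp at hyb

end Farkas

lemma exists_natCast_eq_smul {ι : Type*} [Finite ι] {v : ι → ℚ} (hv : 0 ≤ v) :
    ∃ D : ℕ, 0 < D ∧ ∃ w : ι → ℕ, (fun i => (w i : ℚ)) = (D : ℚ) • v := by
  obtain ⟨b, hb⟩ := IsLocalization.exist_integer_multiples_of_finite (nonZeroDivisors ℤ) v
  choose a ha using hb
  refine ⟨(b : ℤ).natAbs, Int.natAbs_pos.2 (nonZeroDivisors.coe_ne_zero b),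
    fun i => (a i).natAbs, funext fun i => ?_⟩
  have : (a i : ℚ) = (b : ℤ) * v i := by simpa using ha i
  simp [Nat.cast_natAbs, this, abs_mul, abs_of_nonneg (hv i)]

lemma map_natCast_mulVec {R ι η : Type*} [Fintype η] [NonAssocSemiring R]
    (A : Matrix ι η ℕ) (x : η → ℕ) :
    A.map ((↑) : ℕ → R) *ᵥ (fun j => (x j : R)) = fun i => ((A *ᵥ x) i : R) :=
  funext fun i => ((Nat.castRingHom R).map_mulVec A x i).symm

lemma vecMul_map_natCast {R ι η : Type*} [Fintype ι] [NonAssocSemiring R]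
    (A : Matrix ι η ℕ) (y : ι → ℕ) :
    (fun i => (y i : R)) ᵥ* A.map ((↑) : ℕ → R) = fun j => ((y ᵥ* A) j : R) :=
  funext fun j => ((Nat.castRingHom R).map_vecMul A y j).symm

theorem exists_pos_mulVec_le_or_exists_vecMul_lt {ι η : Type*} [Fintype ι] [Fintype η]
    (A B : Matrix ι η ℕ) :
    (∃ x : η → ℕ, (∀ j, 0 < x j) ∧ A *ᵥ x ≤ B *ᵥ x) ∨ ∃ y : ι → ℕ, y ᵥ* B < y ᵥ* A := by
  rcases exists_one_le_nonneg_mulVec_or_exists_vecMul_neg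
      (B.map ((↑) : ℕ → ℚ) - A.map (↑)) with ⟨x, hx1, hx⟩ | ⟨y, hy0, hy⟩
  · obtain ⟨D, hD, w, hw⟩ := exists_natCast_eq_smul fun j => zero_le_one.trans (hx1 j)
    have hDx : 0 ≤ (B.map ((↑) : ℕ → ℚ) - A.map (↑)) *ᵥ fun j => (w j : ℚ) := by
      rw [hw, mulVec_smul]
      exact smul_nonneg D.cast_nonneg hx
    rw [sub_mulVec, sub_nonneg, map_natCast_mulVec, map_natCast_mulVec] at hDx
    refine .inl ⟨w, fun j => ?_, fun i => Nat.cast_le.1 (hDx i)⟩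
    have hwj : (w j : ℚ) = D * x j := congrFun hw j
    have : (0 : ℚ) < w j := by
      rw [hwj]
      exact mul_pos (by exact_mod_cast hD) (zero_lt_one.trans_le (hx1 j))
    exact_mod_cast this
  · obtain ⟨D, hD, w, hw⟩ := exists_natCast_eq_smul hy0
    have hDy : (fun i => (w i : ℚ)) ᵥ* (B.map ((↑) : ℕ → ℚ) - A.map (↑)) < 0 := by
      rw [hw, smul_vecMul]
      exact smul_neg_of_pos_of_neg (by exact_mod_cast hD) hy
    rw [vecMul_sub, sub_neg, vecMul_map_natCast, vecMul_map_natCast] at hDy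
    refine .inr ⟨w, ?_⟩
    simpa [Pi.lt_def, Pi.le_def] using hDy

lemma dotProduct_lt_dotProduct_of_pos_right {R η : Type*} [Fintype η] [Semiring R]
    [PartialOrder R] [IsStrictOrderedRing R] {u v x : η → R} (huv : u < v) (hx : ∀ j, 0 < x j) :
    u ⬝ᵥ x < v ⬝ᵥ x := by
  obtain ⟨hle, j, hj⟩ := Pi.lt_def.1 huv
  exact Finset.sum_lt_sum (fun i _ => mul_le_mul_of_nonneg_right (hle i) (hx i).le)
    ⟨j, Finset.mem_univ j, mul_lt_mul_of_pos_right hj (hx j)⟩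

lemma not_vecMul_lt_vecMul_of_mulVec_le {R ι η : Type*} [Fintype ι] [Fintype η] [Semiring R]
    [PartialOrder R] [IsStrictOrderedRing R] {A B : Matrix ι η R} {x : η → R} {y : ι → R}
    (hx : ∀ j, 0 < x j) (hAB : A *ᵥ x ≤ B *ᵥ x) (hy : 0 ≤ y) : ¬ y ᵥ* B < y ᵥ* A := fun hlt =>
  lt_irrefl ((y ᵥ* B) ⬝ᵥ x) <| calc
    (y ᵥ* B) ⬝ᵥ x < (y ᵥ* A) ⬝ᵥ x := dotProduct_lt_dotProduct_of_pos_right hlt hx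
    _ = y ⬝ᵥ A *ᵥ x := (dotProduct_mulVec y A x).symm
    _ ≤ y ⬝ᵥ B *ᵥ x := dotProduct_le_dotProduct_of_nonneg_left hAB hy
    _ = (y ᵥ* B) ⬝ᵥ x := dotProduct_mulVec y B x

/-- **Lemma (theorem of the alternative over ℕ).**
Let `A` and `B` be `m × n` matrices over `ℕ`. Exactly one of the following holds:
(1) for some `x ∈ ℕⁿ` with every coordinate positive, `A x ≤ B x` coordinate-wise;
(2) for some `y ∈ ℕᵐ`, `Aᵀ y ≥ Bᵀ y` coordinate-wise and `Aᵀ y ≠ Bᵀ y`. -/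
theorem alternative_nat (m n : ℕ) (A B : Matrix (Fin m) (Fin n) ℕ) :
    Xor'
      (∃ x : Fin n → ℕ, (∀ j, 0 < x j) ∧ ∀ i, A.mulVec x i ≤ B.mulVec x i)
      (∃ y : Fin m → ℕ, (∀ j, B.transpose.mulVec y j ≤ A.transpose.mulVec y j) ∧
        A.transpose.mulVec y ≠ B.transpose.mulVec y) := by
  have hlt : ∀ y : Fin m → ℕ, ((∀ j, (Bᵀ *ᵥ y) j ≤ (Aᵀ *ᵥ y) j) ∧ Aᵀ *ᵥ y ≠ Bᵀ *ᵥ y) ↔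
      y ᵥ* B < y ᵥ* A := fun y => by
    rw [mulVec_transpose, mulVec_transpose, lt_iff_le_and_ne, ne_comm]
    rfl
  simp only [hlt]
  refine (xor_iff_or_and_not_and _ _).2 ⟨exists_pos_mulVec_le_or_exists_vecMul_lt A B, ?_⟩
  rintro ⟨⟨x, hx, hAB⟩, y, hy⟩
  exact not_vecMul_lt_vecMul_of_mulVec_le hx hAB (fun i => (y i).zero_le) hy
end

section
/- If (U₁,U₂,<) is a nontrivial coherent extended word equation, then there exists a coherent extended Nielsen transformation that can be applied to it, i.e., some extended Nielsen transformation of (U₁,U₂,<) yields a coherent extended word equation (U'₁,U'₂,<'). -/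
open scoped Classical

namespace ExtWordEq

/-- The type of (candidate) boundary orders: relations on pairs (i,j). -/
abbrev BRel : Type := ℕ × ℕ → ℕ × ℕ → Prop

variable {X : Type*}

/-- The `i`-th side of the word equation (`i = 1` gives `U₁`, anything else `U₂`). -/
def word (U₁ U₂ : List X) (i : ℕ) : List X := if i = 1 then U₁ else U₂

/-- The variable `U_{i,j}` (1-indexed), as an optional value. -/
def letter (U₁ U₂ : List X) (b : ℕ × ℕ) : Option X := (word U₁ U₂ b.1)[b.2 - 1]?

/-- `b` is a boundary of the word equation `(U₁, U₂)`. -/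
def Boundary (U₁ U₂ : List X) (b : ℕ × ℕ) : Prop :=
  (b.1 = 1 ∨ b.1 = 2) ∧ 1 ≤ b.2 ∧ b.2 ≤ (word U₁ U₂ b.1).length

/-- `b` is a boundary of `(U₁, U₂)` or one of the conventional boundaries `(1,0)`, `(2,0)`. -/
def EBoundary (U₁ U₂ : List X) (b : ℕ × ℕ) : Prop :=
  (b.1 = 1 ∨ b.1 = 2) ∧ b.2 ≤ (word U₁ U₂ b.1).length

/-- Incomparability `a ≈ b` for a strict order. -/
def Incomp (lt : BRel) (a b : ℕ × ℕ) : Prop := ¬ lt a b ∧ ¬ lt b a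

/-- `lt` is a boundary order for the word equation `(U₁, U₂)`:
a strict weak order on the boundaries (together with the conventional boundaries
`(1,0) ≈ (2,0)`), extending `(i,j) < (i,j+1)` and with `(1,m) ≈ (2,n)`. -/
structure BoundaryOrder (U₁ U₂ : List X) (lt : BRel) : Prop where
  irrefl : ∀ a, EBoundary U₁ U₂ a → ¬ lt a a
  trans : ∀ a b c, EBoundary U₁ U₂ a → EBoundary U₁ U₂ b → EBoundary U₁ U₂ c →
    lt a b → lt b c → lt a c
  incomp_trans : ∀ a b c, EBoundary U₁ U₂ a → EBoundary U₁ U₂ b → EBoundary U₁ U₂ c →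
    Incomp lt a b → Incomp lt b c → Incomp lt a c
  succ : ∀ i j : ℕ, EBoundary U₁ U₂ (i, j + 1) → lt (i, j) (i, j + 1)
  top : Incomp lt (1, U₁.length) (2, U₂.length)
  bot : Incomp lt (1, 0) (2, 0)

/-- `L(U_{i,1} U_{i,2} ⋯ U_{i,j})` where `L` is the additive extension of a length
assignment on variables. -/
def prefixLen (U₁ U₂ : List X) (L : X → ℕ) (b : ℕ × ℕ) : ℕ :=
  (((word U₁ U₂ b.1).take b.2).map L).sum

/-- The extended word equation `(U₁, U₂, lt)` is coherent. -/
def Coherent (U₁ U₂ : List X) (lt : BRel) : Prop :=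
  ∃ L : X → ℕ, (∀ x, 0 < L x) ∧
    ∀ a b, Boundary U₁ U₂ a → Boundary U₁ U₂ b →
      (lt a b ↔ prefixLen U₁ U₂ L a < prefixLen U₁ U₂ L b)

/-- The boundary `a` cuts the boundary `b`. -/
def Cuts (U₁ U₂ : List X) (lt : BRel) (a b : ℕ × ℕ) : Prop :=
  Boundary U₁ U₂ a ∧ Boundary U₁ U₂ b ∧ a ≠ b ∧
    lt (a.1, a.2 - 1) b ∧ lt (b.1, b.2 - 1) a

/-- The boundary `a` mirrors the boundary `b`. -/
def Mirrors (U₁ U₂ : List X) (lt : BRel) (a b : ℕ × ℕ) : Prop :=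
  Boundary U₁ U₂ a ∧ Boundary U₁ U₂ b ∧ letter U₁ U₂ a = letter U₁ U₂ b ∧
    (¬ Incomp lt a b ∨ ¬ Incomp lt (a.1, a.2 - 1) (b.1, b.2 - 1))

/-- Edge relation of the cut graph `G_{U₁,U₂,<}`. -/
def CutEdge (U₁ U₂ : List X) (lt : BRel) (a b : ℕ × ℕ) : Prop :=
  ∃ c, Cuts U₁ U₂ lt a c ∧ Mirrors U₁ U₂ lt c b

/-- `w 0, w 1, …, w n` is a cycle (of length `n ≥ 1`) in the cut graph. -/
def IsCycle (U₁ U₂ : List X) (lt : BRel) (n : ℕ) (w : ℕ → ℕ × ℕ) : Prop :=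
  0 < n ∧ w n = w 0 ∧ ∀ k < n, CutEdge U₁ U₂ lt (w k) (w (k + 1))

/-- The cut graph `G_{U₁,U₂,<}` is acyclic. -/
def Acyclic (U₁ U₂ : List X) (lt : BRel) : Prop :=
  ¬ ∃ n w, IsCycle U₁ U₂ lt n w

variable [DecidableEq X]

/-- Case I extended Nielsen transformation (here `x = U_{1,1}`, `y = U_{2,1}`,
and `T(y) = x`). -/
def NielsenI (U₁ U₂ : List X) (lt : BRel) (U₁' U₂' : List X) (lt' : BRel) : Prop :=
  ∃ x y : X, U₁.head? = some x ∧ U₂.head? = some y ∧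
    Incomp lt (1, 1) (2, 1) ∧
    U₁' = (U₁.map fun z => if z = y then x else z).tail ∧
    U₂' = (U₂.map fun z => if z = y then x else z).tail ∧
    BoundaryOrder U₁' U₂' lt' ∧
    ∀ a b : ℕ × ℕ, EBoundary U₁' U₂' a → EBoundary U₁' U₂' b →
      (lt' a b ↔ lt (a.1, a.2 + 1) (b.1, b.2 + 1))

/-- The substitution `T(x) = y x` (identity on other variables), applied to a word. -/
def expand (x y : X) (l : List X) : List X :=
  l.flatMap fun z => if z = x then [y, x] else [z]

/-- The map `μ(i,j) = j + #{j' ≤ j : U_{i,j'} = x} − 1` (as a map on boundaries),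
where `x = U_{1,1}`. -/
def mu (U₁ U₂ : List X) (x : X) (b : ℕ × ℕ) : ℕ × ℕ :=
  (b.1, b.2 + ((word U₁ U₂ b.1).take b.2).count x - 1)

/-- The map `ν(i,j) = j − #{j' ≤ j : U'_{i,j'} = x} + 1` (as a map on boundaries),
where `x = U_{1,1}`. -/
def nu (U₁' U₂' : List X) (x : X) (b : ℕ × ℕ) : ℕ × ℕ :=
  (b.1, b.2 - ((word U₁' U₂' b.1).take b.2).count x + 1)

/-- Membership in `B⁻ = B ∖ {(2,1)}`. -/
def Bminus (U₁ U₂ : List X) (b : ℕ × ℕ) : Prop := Boundary U₁ U₂ b ∧ b ≠ (2, 1)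

/-- Membership in `B'⁻ = {(i, μ(i,j)) : (i,j) ∈ B⁻}` (`x = U_{1,1}`). -/
def Bpminus (U₁ U₂ : List X) (x : X) (b' : ℕ × ℕ) : Prop :=
  ∃ b, Bminus U₁ U₂ b ∧ mu U₁ U₂ x b = b'

/-- Case II extended Nielsen transformation, with the heads `x = U_{1,1}`,
`y = U_{2,1}` made explicit. -/
def NielsenIIxy (U₁ U₂ : List X) (lt : BRel) (U₁' U₂' : List X) (lt' : BRel)
    (x y : X) : Prop :=
  U₁.head? = some x ∧ U₂.head? = some y ∧
  lt (2, 1) (1, 1) ∧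
  U₁' = (expand x y U₁).tail ∧
  U₂' = (expand x y U₂).tail ∧
  BoundaryOrder U₁' U₂' lt' ∧
  ∀ a b, Bpminus U₁ U₂ x a → Bpminus U₁ U₂ x b →
    (lt' a b ↔ lt (nu U₁' U₂' x a) (nu U₁' U₂' x b))

/-- Case II extended Nielsen transformation. -/
def NielsenII (U₁ U₂ : List X) (lt : BRel) (U₁' U₂' : List X) (lt' : BRel) : Prop :=
  ∃ x y : X, NielsenIIxy U₁ U₂ lt U₁' U₂' lt' x y

/-- The dual boundary order. -/
def dualRel (lt : BRel) : BRel := fun a b => lt (3 - a.1, a.2) (3 - b.1, b.2)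

/-- Case III extended Nielsen transformation: case II applied to the dual,
then dualized back. -/
def NielsenIII (U₁ U₂ : List X) (lt : BRel) (U₁' U₂' : List X) (lt' : BRel) : Prop :=
  NielsenII U₂ U₁ (dualRel lt) U₂' U₁' (dualRel lt')

/-- `(U₁', U₂', lt')` is an extended Nielsen transformation of the nontrivial coherent
extended word equation `(U₁, U₂, lt)`. -/
def ExtNielsen (U₁ U₂ : List X) (lt : BRel) (U₁' U₂' : List X) (lt' : BRel) : Prop :=
  U₁ ≠ [] ∧ U₂ ≠ [] ∧ BoundaryOrder U₁ U₂ lt ∧ Coherent U₁ U₂ lt ∧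
    (NielsenI U₁ U₂ lt U₁' U₂' lt' ∨ NielsenII U₁ U₂ lt U₁' U₂' lt' ∨
      NielsenIII U₁ U₂ lt U₁' U₂' lt')

/-- A coherent extended Nielsen transformation. -/
def CohNielsen (U₁ U₂ : List X) (lt : BRel) (U₁' U₂' : List X) (lt' : BRel) : Prop :=
  ExtNielsen U₁ U₂ lt U₁' U₂' lt' ∧ Coherent U₁' U₂' lt'

/-- `(U₁, U₂, lt)` is (strongly) terminating: there is no infinite sequence of coherent
extended Nielsen transformations starting from it. -/
def Terminating (U₁ U₂ : List X) (lt : BRel) : Prop :=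
  ¬ ∃ f : ℕ → List X × List X × BRel,
    f 0 = (U₁, U₂, lt) ∧
    ∀ n, CohNielsen (f n).1 (f n).2.1 (f n).2.2 (f (n + 1)).1 (f (n + 1)).2.1 (f (n + 1)).2.2

/-!
Fix a positive length assignment `L` realizing `<` and compare the heads `x = U_{1,1}` and
`y = U_{2,1}`. In case I, `L x = L y`, so identifying `y` with `x` preserves `L`, and deleting
the heads shortens every prefix by `L x`. In case II, `L y < L x`; giving `x` the new length
`L x - L y` makes `x ↦ y x` length-preserving, and the new prefix ending at `μ(b)` is shorter
than the old one ending at `b` by exactly `L y`, with `ν(μ(b)) = b`. In both cases the order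
induced on the new boundaries by the new lengths is therefore a boundary order compatible with
`<`, and it is coherent by construction. Case III is case II for the dual equation.
-/

section
-- Rebinding `X` keeps the ambient `[DecidableEq X]` out of the lemmas of this section.
variable {X : Type*} {U₁ U₂ V₁ V₂ : List X} {L L' : X → ℕ} {lt : BRel}

/-- `Coherent U₁ U₂ lt` says that `lt` is realized by some positive `L`. -/
def Realizes (U₁ U₂ : List X) (lt : BRel) (L : X → ℕ) : Prop :=
  ∀ a b, Boundary U₁ U₂ a → Boundary U₁ U₂ b →
    (lt a b ↔ prefixLen U₁ U₂ L a < prefixLen U₁ U₂ L b)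

def lenRel (U₁ U₂ : List X) (L : X → ℕ) : BRel :=
  fun a b => prefixLen U₁ U₂ L a < prefixLen U₁ U₂ L b

lemma prefixLen_lt_succ (hL : ∀ x, 0 < L x) {i j : ℕ} (h : EBoundary U₁ U₂ (i, j + 1)) :
    prefixLen U₁ U₂ L (i, j) < prefixLen U₁ U₂ L (i, j + 1) := by
  have hj : j < (word U₁ U₂ i).length := h.2
  simp only [prefixLen, List.take_add_one, List.getElem?_eq_getElem hj, Option.toList_some,
    List.map_append, List.sum_append, List.map_singleton, List.sum_singleton]
  exact Nat.lt_add_of_pos_right (hL _)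

lemma boundaryOrder_lenRel (hL : ∀ x, 0 < L x)
    (htop : Incomp (lenRel U₁ U₂ L) (1, U₁.length) (2, U₂.length)) :
    BoundaryOrder U₁ U₂ (lenRel U₁ U₂ L) where
  irrefl _ _ := lt_irrefl _
  trans _ _ _ _ _ _ := lt_trans
  incomp_trans _ _ _ _ _ _ hab hbc := by
    simp only [Incomp, lenRel, not_lt] at *
    omega
  succ _ _ h := prefixLen_lt_succ hL h
  top := htop
  bot := by simp [Incomp, lenRel, prefixLen]

lemma coherent_lenRel (hL : ∀ x, 0 < L x) : Coherent U₁ U₂ (lenRel U₁ U₂ L) :=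
  ⟨L, hL, fun _ _ _ _ => Iff.rfl⟩

lemma Realizes.prefixLen_eq (hrep : Realizes U₁ U₂ lt L) {a b : ℕ × ℕ}
    (ha : Boundary U₁ U₂ a) (hb : Boundary U₁ U₂ b) (h : Incomp lt a b) :
    prefixLen U₁ U₂ L a = prefixLen U₁ U₂ L b :=
  le_antisymm (not_lt.mp fun h' => h.2 ((hrep b a hb ha).mpr h'))
    (not_lt.mp fun h' => h.1 ((hrep a b ha hb).mpr h'))

lemma Realizes.lenRel_iff (hrep : Realizes U₁ U₂ lt L) {c : ℕ} {a b a' b' : ℕ × ℕ}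
    (ha : Boundary U₁ U₂ a) (hb : Boundary U₁ U₂ b)
    (ha' : prefixLen V₁ V₂ L' a' + c = prefixLen U₁ U₂ L a)
    (hb' : prefixLen V₁ V₂ L' b' + c = prefixLen U₁ U₂ L b) :
    lenRel V₁ V₂ L' a' b' ↔ lt a b := by
  rw [hrep a b ha hb, lenRel]
  omega

lemma Realizes.incomp_lenRel (hrep : Realizes U₁ U₂ lt L) {c : ℕ} {a b a' b' : ℕ × ℕ}
    (ha : Boundary U₁ U₂ a) (hb : Boundary U₁ U₂ b)
    (ha' : prefixLen V₁ V₂ L' a' + c = prefixLen U₁ U₂ L a)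
    (hb' : prefixLen V₁ V₂ L' b' + c = prefixLen U₁ U₂ L b) (h : Incomp lt a b) :
    Incomp (lenRel V₁ V₂ L') a' b' :=
  ⟨mt (hrep.lenRel_iff ha hb ha' hb').mp h.1, mt (hrep.lenRel_iff hb ha hb' ha').mp h.2⟩

lemma word_swap (U₁ U₂ : List X) {i : ℕ} (hi : i = 1 ∨ i = 2) :
    word U₂ U₁ i = word U₁ U₂ (3 - i) := by
  rcases hi with rfl | rfl <;> rfl

lemma EBoundary.swap {a : ℕ × ℕ} (h : EBoundary U₂ U₁ a) : EBoundary U₁ U₂ (3 - a.1, a.2) :=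
  ⟨by have := h.1; omega, word_swap U₁ U₂ h.1 ▸ h.2⟩

lemma Boundary.swap {a : ℕ × ℕ} (h : Boundary U₂ U₁ a) : Boundary U₁ U₂ (3 - a.1, a.2) :=
  ⟨by have := h.1; omega, h.2.1, word_swap U₁ U₂ h.1 ▸ h.2.2⟩

lemma prefixLen_swap (L : X → ℕ) {a : ℕ × ℕ} (hi : a.1 = 1 ∨ a.1 = 2) :
    prefixLen U₂ U₁ L a = prefixLen U₁ U₂ L (3 - a.1, a.2) := by
  rw [prefixLen, word_swap U₁ U₂ hi, prefixLen]

lemma BoundaryOrder.dual (hbo : BoundaryOrder U₁ U₂ lt) : BoundaryOrder U₂ U₁ (dualRel lt) where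
  irrefl _ ha := hbo.irrefl _ ha.swap
  trans _ _ _ ha hb hc := hbo.trans _ _ _ ha.swap hb.swap hc.swap
  incomp_trans _ _ _ ha hb hc := hbo.incomp_trans _ _ _ ha.swap hb.swap hc.swap
  succ i j h := hbo.succ (3 - i) j h.swap
  top := ⟨hbo.top.2, hbo.top.1⟩
  bot := ⟨hbo.bot.2, hbo.bot.1⟩

lemma Coherent.dual (h : Coherent U₁ U₂ lt) : Coherent U₂ U₁ (dualRel lt) := by
  obtain ⟨L, hL, hrep⟩ := h
  refine ⟨L, hL, fun a b ha hb => ?_⟩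
  rw [prefixLen_swap L ha.1, prefixLen_swap L hb.1]
  exact hrep _ _ ha.swap hb.swap

lemma dualRel_dualRel_apply (r : BRel) {a b : ℕ × ℕ} (ha : a.1 = 1 ∨ a.1 = 2)
    (hb : b.1 = 1 ∨ b.1 = 2) : dualRel (dualRel r) a b ↔ r a b := by
  obtain ⟨i, j⟩ := a
  obtain ⟨i', j'⟩ := b
  simp only at ha hb
  rcases ha with rfl | rfl <;> rcases hb with rfl | rfl <;> rfl

lemma word_map (f : X → X) (U₁ U₂ : List X) (i : ℕ) :
    word (U₁.map f) (U₂.map f) i = (word U₁ U₂ i).map f := by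
  unfold word; split_ifs <;> rfl

lemma prefixLen_map {f : X → X} (hf : ∀ z, L (f z) = L z) (b : ℕ × ℕ) :
    prefixLen (U₁.map f) (U₂.map f) L b = prefixLen U₁ U₂ L b := by
  simp [prefixLen, word_map, ← List.map_take, Function.comp_def, hf]

lemma prefixLen_cons_succ {x y : X} {t₁ t₂ : List X} (hxy : L x = L y) (i j : ℕ) :
    prefixLen (x :: t₁) (y :: t₂) L (i, j + 1) = L x + prefixLen t₁ t₂ L (i, j) := by
  unfold prefixLen word; split_ifs <;> simp [hxy]

lemma EBoundary.of_map {f : X → X} {a : ℕ × ℕ} (h : EBoundary (U₁.map f) (U₂.map f) a) :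
    EBoundary U₁ U₂ a := by
  simpa [EBoundary, word_map] using h

lemma Boundary.cons_succ {x y : X} {t₁ t₂ : List X} {a : ℕ × ℕ} (h : EBoundary t₁ t₂ a) :
    Boundary (x :: t₁) (y :: t₂) (a.1, a.2 + 1) := by
  refine ⟨h.1, by omega, ?_⟩
  have := h.2
  unfold word at *; split_ifs at * <;> simpa

end

section Expand
variable {x y : X}

lemma expand_cons (z : X) (l : List X) :
    expand x y (z :: l) = (if z = x then [y, x] else [z]) ++ expand x y l :=
  List.flatMap_cons

lemma length_expand (l : List X) : (expand x y l).length = l.length + l.count x := by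
  induction l with
  | nil => rfl
  | cons z l ih =>
    rw [expand_cons]
    by_cases hz : z = x <;> simp [hz, ih] <;> omega

lemma count_expand (hyx : y ≠ x) (l : List X) : (expand x y l).count x = l.count x := by
  induction l with
  | nil => rfl
  | cons z l ih =>
    rw [expand_cons]
    by_cases hz : z = x <;> simp [hz, ih, hyx]

lemma sum_map_expand {L : X → ℕ} (hyx : y ≠ x) (hle : L y ≤ L x) (l : List X) :
    ((expand x y l).map (Function.update L x (L x - L y))).sum = (l.map L).sum := by
  induction l with
  | nil => rfl
  | cons z l ih =>
    rw [expand_cons]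
    by_cases hz : z = x
    · simp [hz, ih, hyx]
      omega
    · simp [hz, ih]

lemma take_expand {j : ℕ} (l : List X) (hj : j ≤ l.length) :
    (expand x y l).take (j + (l.take j).count x) = expand x y (l.take j) := by
  have h : expand x y l = expand x y (l.take j) ++ expand x y (l.drop j) := by
    rw [expand, expand, expand, ← List.flatMap_append, List.take_append_drop]
  rw [h, List.take_left' (by rw [length_expand, List.length_take]; omega)]

lemma cons_take_of_expand_eq_cons {w w' : List X} (h : expand x y w = y :: w') {j : ℕ}
    (hj₁ : 1 ≤ j) (hj₂ : j ≤ w.length) :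
    y :: w'.take (j + (w.take j).count x - 1) = expand x y (w.take j) := by
  rw [← take_expand w hj₂, h, List.take_cons (by omega)]

end Expand

section Substitution
variable {x y : X} {U₁ U₂ V₁ V₂ : List X}

lemma prefixLen_mu_add (hD : ∀ i, expand x y (word U₁ U₂ i) = y :: word V₁ V₂ i)
    {L : X → ℕ} (hyx : y ≠ x) (hle : L y ≤ L x) {b : ℕ × ℕ} (hb : Boundary U₁ U₂ b) :
    prefixLen V₁ V₂ (Function.update L x (L x - L y)) (mu U₁ U₂ x b) + L y =
      prefixLen U₁ U₂ L b := by
  have h := congrArg (fun l => (l.map (Function.update L x (L x - L y))).sum)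
    (cons_take_of_expand_eq_cons (hD b.1) hb.2.1 hb.2.2)
  simp only [List.map_cons, List.sum_cons, sum_map_expand hyx hle,
    Function.update_of_ne hyx] at h
  simp only [prefixLen, mu]
  omega

lemma nu_mu (hD : ∀ i, expand x y (word U₁ U₂ i) = y :: word V₁ V₂ i) (hyx : y ≠ x)
    {b : ℕ × ℕ} (hb : Boundary U₁ U₂ b) : nu V₁ V₂ x (mu U₁ U₂ x b) = b := by
  have h := congrArg (List.count x) (cons_take_of_expand_eq_cons (hD b.1) hb.2.1 hb.2.2)
  rw [List.count_cons_of_ne hyx, count_expand hyx] at h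
  have := hb.2.1
  refine Prod.ext rfl ?_
  simp only [mu, nu, h]
  omega

lemma mu_length (hD : ∀ i, expand x y (word U₁ U₂ i) = y :: word V₁ V₂ i) (i : ℕ) :
    mu U₁ U₂ x (i, (word U₁ U₂ i).length) = (i, (word V₁ V₂ i).length) := by
  have h := congrArg List.length (hD i)
  rw [length_expand, List.length_cons] at h
  refine Prod.ext rfl ?_
  simp only [mu, List.take_length]
  omega

end Substitution

section Cases
variable {lt : BRel}

lemma exists_coherent_nielsenI (x y : X) (t₁ t₂ : List X)
    (htop : Incomp lt (1, (x :: t₁).length) (2, (y :: t₂).length))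
    (hcoh : Coherent (x :: t₁) (y :: t₂) lt) (hinc : Incomp lt (1, 1) (2, 1)) :
    ∃ (U₁' U₂' : List X) (lt' : BRel),
      NielsenI (x :: t₁) (y :: t₂) lt U₁' U₂' lt' ∧ Coherent U₁' U₂' lt' := by
  obtain ⟨L, hL, hrep : Realizes (x :: t₁) (y :: t₂) lt L⟩ := hcoh
  have hxy : L x = L y := by
    simpa [prefixLen, word] using hrep.prefixLen_eq (by simp [Boundary, word])
      (by simp [Boundary, word]) hinc
  set g : X → X := fun z => if z = y then x else z
  have hg : ∀ z, L (g z) = L z := fun z => by by_cases hz : z = y <;> simp [g, hz, hxy]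
  have key : ∀ a : ℕ × ℕ, prefixLen (t₁.map g) (t₂.map g) L a + L x =
      prefixLen (x :: t₁) (y :: t₂) L (a.1, a.2 + 1) := fun a => by
    rw [prefixLen_map hg, prefixLen_cons_succ hxy]
    exact add_comm _ _
  refine ⟨t₁.map g, t₂.map g, lenRel (t₁.map g) (t₂.map g) L,
    ⟨x, y, rfl, rfl, hinc, rfl, rfl, boundaryOrder_lenRel hL ?_, fun a b ha hb => ?_⟩,
    coherent_lenRel hL⟩
  · exact hrep.incomp_lenRel (by simp [Boundary, word]) (by simp [Boundary, word])
      (key _) (key _) (by simpa using htop)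
  · exact hrep.lenRel_iff (Boundary.cons_succ ha.of_map) (Boundary.cons_succ hb.of_map)
      (key a) (key b)

lemma exists_coherent_nielsenII (x y : X) (t₁ t₂ : List X)
    (htop : Incomp lt (1, (x :: t₁).length) (2, (y :: t₂).length))
    (hcoh : Coherent (x :: t₁) (y :: t₂) lt) (hlt : lt (2, 1) (1, 1)) :
    ∃ (U₁' U₂' : List X) (lt' : BRel),
      NielsenII (x :: t₁) (y :: t₂) lt U₁' U₂' lt' ∧ Coherent U₁' U₂' lt' := by
  obtain ⟨L, hL, hrep : Realizes (x :: t₁) (y :: t₂) lt L⟩ := hcoh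
  have hyx : L y < L x := by
    simpa [prefixLen, word] using
      (hrep (2, 1) (1, 1) (by simp [Boundary, word]) (by simp [Boundary, word])).mp hlt
  have hne : y ≠ x := by
    rintro rfl
    exact lt_irrefl _ hyx
  set L' := Function.update L x (L x - L y)
  have hL' : ∀ z, 0 < L' z := fun z => by
    by_cases hz : z = x
    · simpa [L', hz] using hyx
    · simpa [L', hz] using hL z
  set U₁' := x :: expand x y t₁
  set U₂' := expand x y t₂
  have hD : ∀ i, expand x y (word (x :: t₁) (y :: t₂) i) = y :: word U₁' U₂' i := by
    intro i
    unfold word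
    split_ifs <;> simp [expand_cons, hne, U₁', U₂']
  have key := fun b (hb : Boundary (x :: t₁) (y :: t₂) b) => prefixLen_mu_add hD hne hyx.le hb
  refine ⟨U₁', U₂', lenRel U₁' U₂' L', ⟨x, y, rfl, rfl, hlt, by simp [expand_cons, U₁'],
    by simp [expand_cons, hne, U₂'], boundaryOrder_lenRel hL' ?_, ?_⟩, coherent_lenRel hL'⟩
  · have hb₁ : Boundary (x :: t₁) (y :: t₂) (1, (x :: t₁).length) := by simp [Boundary, word]
    have hb₂ : Boundary (x :: t₁) (y :: t₂) (2, (y :: t₂).length) := by simp [Boundary, word]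
    have h₁ : mu (x :: t₁) (y :: t₂) x (1, (x :: t₁).length) = (1, U₁'.length) :=
      mu_length hD 1
    have h₂ : mu (x :: t₁) (y :: t₂) x (2, (y :: t₂).length) = (2, U₂'.length) :=
      mu_length hD 2
    rw [← h₁, ← h₂]
    exact hrep.incomp_lenRel hb₁ hb₂ (key _ hb₁) (key _ hb₂) htop
  · rintro _ _ ⟨a, ⟨ha, -⟩, rfl⟩ ⟨b, ⟨hb, -⟩, rfl⟩
    rw [nu_mu hD hne ha, nu_mu hD hne hb]
    exact hrep.lenRel_iff ha hb (key a ha) (key b hb)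

lemma NielsenII.dualRel_dualRel {U₁ U₂ V₁ V₂ : List X} {r : BRel}
    (h : NielsenII U₁ U₂ lt V₁ V₂ r) : NielsenII U₁ U₂ lt V₁ V₂ (dualRel (dualRel r)) := by
  obtain ⟨x, y, hx, hy, hlt, hV₁, hV₂, hbo, hiff⟩ := h
  refine ⟨x, y, hx, hy, hlt, hV₁, hV₂, hbo.dual.dual, ?_⟩
  have hfst : ∀ c, Bpminus U₁ U₂ x c → c.1 = 1 ∨ c.1 = 2 := by
    rintro _ ⟨c, hc, rfl⟩
    exact hc.1.1
  intro a b ha hb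
  rw [dualRel_dualRel_apply r (hfst a ha) (hfst b hb)]
  exact hiff a b ha hb

lemma exists_coherent_nielsenIII (x y : X) (t₁ t₂ : List X)
    (htop : Incomp lt (1, (x :: t₁).length) (2, (y :: t₂).length))
    (hcoh : Coherent (x :: t₁) (y :: t₂) lt) (hlt : lt (1, 1) (2, 1)) :
    ∃ (U₁' U₂' : List X) (lt' : BRel),
      NielsenIII (x :: t₁) (y :: t₂) lt U₁' U₂' lt' ∧ Coherent U₁' U₂' lt' := by
  obtain ⟨V₂, V₁, r, hN, hc⟩ := exists_coherent_nielsenII y x t₂ t₁ ⟨htop.2, htop.1⟩ hcoh.dual hlt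
  exact ⟨V₁, V₂, dualRel r, hN.dualRel_dualRel, hc.dual⟩

end Cases

/-- **Proposition.** Every nontrivial coherent extended word equation admits
a coherent extended Nielsen transformation. -/
theorem exists_coherent_ext_nielsen (U₁ U₂ : List X) (lt : BRel)
    (h₁ : U₁ ≠ []) (h₂ : U₂ ≠ []) (hbo : BoundaryOrder U₁ U₂ lt)
    (hcoh : Coherent U₁ U₂ lt) :
    ∃ (U₁' U₂' : List X) (lt' : BRel), CohNielsen U₁ U₂ lt U₁' U₂' lt' := by
  obtain ⟨x, t₁, rfl⟩ := List.exists_cons_of_ne_nil h₁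
  obtain ⟨y, t₂, rfl⟩ := List.exists_cons_of_ne_nil h₂
  suffices ∃ (U₁' U₂' : List X) (lt' : BRel),
      (NielsenI (x :: t₁) (y :: t₂) lt U₁' U₂' lt' ∨ NielsenII (x :: t₁) (y :: t₂) lt U₁' U₂' lt' ∨
        NielsenIII (x :: t₁) (y :: t₂) lt U₁' U₂' lt') ∧ Coherent U₁' U₂' lt' by
    obtain ⟨U₁', U₂', lt', hN, hc⟩ := this
    exact ⟨U₁', U₂', lt', ⟨h₁, h₂, hbo, hcoh, hN⟩, hc⟩
  by_cases h₂₁ : lt (2, 1) (1, 1)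
  · obtain ⟨U₁', U₂', lt', hN, hc⟩ := exists_coherent_nielsenII x y t₁ t₂ hbo.top hcoh h₂₁
    exact ⟨U₁', U₂', lt', .inr (.inl hN), hc⟩
  by_cases h₁₂ : lt (1, 1) (2, 1)
  · obtain ⟨U₁', U₂', lt', hN, hc⟩ := exists_coherent_nielsenIII x y t₁ t₂ hbo.top hcoh h₁₂
    exact ⟨U₁', U₂', lt', .inr (.inr hN), hc⟩
  · obtain ⟨U₁', U₂', lt', hN, hc⟩ :=
      exists_coherent_nielsenI x y t₁ t₂ hbo.top hcoh ⟨h₁₂, h₂₁⟩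
    exact ⟨U₁', U₂', lt', .inl hN, hc⟩

end ExtWordEq
end

section
/- Let (U₁,U₂,<) be an extended word equation. If the cut graph G_{U₁,U₂,<} is acyclic, then (U₁,U₂,<) is coherent. -/
/-!
Ranking the boundaries by the order turns the occurrence `U_{i,j}` into the interval
`(rank (i, j - 1), rank (i, j)]` of `ℕ`, so it suffices to give every unit gap `(t - 1, t]` a
positive length `g t` such that equally labelled intervals get the same total length; `L` is then
read off. Such gaps exist by induction on the number of intervals: acyclicity of the cut graph
yields an interval `a` without outgoing edges, which says that every interval that has to be
matched with a differently placed one of the same label is disjoint from `a`. Choose gaps for the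
other intervals, scale them all by the length of `a`, and refill the gaps inside `a` so that `a`
gets the common length of its label.
-/


open scoped Classical

namespace ExtWordEq

variable {X : Type*}

variable [DecidableEq X]

section LabelledIntervals

variable {ι β : Type*}

def weight (g : ℕ → ℕ) (p : ℕ × ℕ) : ℕ := ∑ t ∈ Finset.Ioc p.1 p.2, g t

lemma weight_pos {g : ℕ → ℕ} (hg : ∀ t, 0 < g t) {p : ℕ × ℕ} (hp : p.1 < p.2) :
    0 < weight g p :=
  Finset.sum_pos (fun t _ => hg t) (Finset.nonempty_Ioc.2 hp)

lemma weight_lt_weight_iff {g : ℕ → ℕ} (hg : ∀ t, 0 < g t) {r m n : ℕ} (hm : r ≤ m) :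
    weight g (r, m) < weight g (r, n) ↔ m < n := by
  constructor
  · intro h
    by_contra! hnm
    exact (Finset.sum_le_sum_of_subset (Finset.Ioc_subset_Ioc_right hnm)).not_gt h
  · intro h
    have hsplit : weight g (r, m) + weight g (m, n) = weight g (r, n) :=
      Finset.sum_Ioc_consecutive g hm h.le
    have := weight_pos hg (p := (m, n)) h
    omega

/-- The cut graph of a family of labelled intervals `(I o).1 < t ≤ (I o).2`: `a` cuts `c` when
they overlap, and `c` mirrors `b` when they carry the same label at different intervals. -/
def IntervalCutEdge (V : Finset ι) (ℓ : ι → β) (I : ι → ℕ × ℕ) (a b : ι) : Prop :=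
  a ∈ V ∧ b ∈ V ∧ ∃ c ∈ V, a ≠ c ∧ (I a).1 < (I c).2 ∧ (I c).1 < (I a).2 ∧
    ℓ c = ℓ b ∧ I c ≠ I b

lemma IntervalCutEdge.mono {V W : Finset ι} {ℓ : ι → β} {I : ι → ℕ × ℕ} (hVW : V ⊆ W) :
    IntervalCutEdge V ℓ I ≤ IntervalCutEdge W ℓ I :=
  fun _ _ ⟨ha, hb, c, hc, hrest⟩ => ⟨hVW ha, hVW hb, c, hVW hc, hrest⟩

lemma exists_forall_not_rel_of_acyclic {E : ι → ι → Prop}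
    (hE : ∀ a, ¬ Relation.TransGen E a a) {V : Finset ι} (hV : V.Nonempty) :
    ∃ a ∈ V, ∀ b ∈ V, ¬ E a b := by
  let _ : IsStrictOrder ι (flip (Relation.TransGen E)) :=
    { irrefl := hE, trans := fun _ _ _ hab hbc => hbc.trans hab }
  obtain ⟨⟨a, ha⟩, -, hmin⟩ :=
    (V.finite_toSet.wellFoundedOn (r := flip (Relation.TransGen E))).has_min Set.univ
      ⟨⟨_, hV.choose_spec⟩, trivial⟩
  exact ⟨a, ha, fun b hb hab => hmin ⟨b, hb⟩ trivial (Relation.TransGen.single hab)⟩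

variable {V : Finset ι} {ℓ : ι → β} {I : ι → ℕ × ℕ}

lemma disjoint_of_forall_not_intervalCutEdge {a : ι} (ha : a ∈ V)
    (hsink : ∀ b ∈ V, ¬ IntervalCutEdge V ℓ I a b) {o o' : ι} (ho : o ∈ V) (ho' : o' ∈ V)
    (hoa : o ≠ a) (hl : ℓ o = ℓ o') (hI : I o ≠ I o') :
    (I o).2 ≤ (I a).1 ∨ (I a).2 ≤ (I o).1 := by
  by_contra! h
  exact hsink o' ho' ⟨ha, ho', o, ho, hoa.symm, h.1, h.2, hl, hI⟩

def patch (p : ℕ × ℕ) (S : ℕ) (g : ℕ → ℕ) (t : ℕ) : ℕ :=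
  if t ∈ Finset.Ioc p.1 p.2 then S else (p.2 - p.1) * g t

lemma patch_pos {p : ℕ × ℕ} (hp : p.1 < p.2) {S : ℕ} (hS : 0 < S) {g : ℕ → ℕ}
    (hg : ∀ t, 0 < g t) (t : ℕ) : 0 < patch p S g t := by
  unfold patch
  split_ifs
  exacts [hS, Nat.mul_pos (by omega) (hg t)]

lemma weight_patch_self (p : ℕ × ℕ) (S : ℕ) (g : ℕ → ℕ) :
    weight (patch p S g) p = (p.2 - p.1) * S := by
  simp only [weight, patch]
  rw [Finset.sum_congr rfl fun t ht => if_pos ht, Finset.sum_const, Nat.card_Ioc, smul_eq_mul]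

lemma weight_patch_of_disjoint {p q : ℕ × ℕ} (hpq : q.2 ≤ p.1 ∨ p.2 ≤ q.1) (S : ℕ)
    (g : ℕ → ℕ) : weight (patch p S g) q = (p.2 - p.1) * weight g q := by
  rw [weight, weight, Finset.mul_sum]
  refine Finset.sum_congr rfl fun t ht => if_neg ?_
  simp only [Finset.mem_Ioc] at ht ⊢
  omega

lemma exists_gaps_of_erase {a : ι} (ha : a ∈ V) (hI : ∀ o ∈ V, (I o).1 < (I o).2)
    (hsink : ∀ b ∈ V, ¬ IntervalCutEdge V ℓ I a b) {g : ℕ → ℕ} (hg : ∀ t, 0 < g t)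
    (hgV : ∀ o ∈ V.erase a, ∀ o' ∈ V.erase a, ℓ o = ℓ o' → weight g (I o) = weight g (I o')) :
    ∃ g' : ℕ → ℕ, (∀ t, 0 < g' t) ∧
      ∀ o ∈ V, ∀ o' ∈ V, ℓ o = ℓ o' → weight g' (I o) = weight g' (I o') := by
  obtain ⟨S, hS, hSa⟩ : ∃ S, 0 < S ∧ ∀ o ∈ V.erase a, ℓ o = ℓ a → weight g (I o) = S := by
    by_cases h : ∃ o ∈ V.erase a, ℓ o = ℓ a
    · obtain ⟨o₀, ho₀, hl₀⟩ := h
      exact ⟨_, weight_pos hg (hI o₀ (Finset.mem_of_mem_erase ho₀)),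
        fun o ho hl => hgV o ho o₀ ho₀ (hl.trans hl₀.symm)⟩
    · push Not at h
      exact ⟨1, one_pos, fun o ho hl => absurd hl (h o ho)⟩
  have hscale : ∀ o ∈ V, ∀ o' ∈ V, o ≠ a → ℓ o = ℓ o' → I o ≠ I o' →
      weight (patch (I a) S g) (I o) = ((I a).2 - (I a).1) * weight g (I o) :=
    fun o ho o' ho' hoa hl hne =>
      weight_patch_of_disjoint (disjoint_of_forall_not_intervalCutEdge ha hsink ho ho' hoa hl hne)
        S g
  refine ⟨patch (I a) S g, patch_pos (hI a ha) hS hg, fun o ho o' ho' hl => ?_⟩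
  by_cases hne : I o = I o'
  · rw [hne]
  rcases eq_or_ne o a with rfl | hoa
  · have ho'a : o' ≠ o := fun h => hne (congrArg I h.symm)
    rw [weight_patch_self, hscale o' ho' o ho ho'a hl.symm (Ne.symm hne),
      hSa o' (Finset.mem_erase.2 ⟨ho'a, ho'⟩) hl.symm]
  rcases eq_or_ne o' a with rfl | ho'a
  · rw [weight_patch_self, hscale o ho o' ho' hoa hl hne, hSa o (Finset.mem_erase.2 ⟨hoa, ho⟩) hl]
  rw [hscale o ho o' ho' hoa hl hne, hscale o' ho' o ho ho'a hl.symm (Ne.symm hne),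
    hgV o (Finset.mem_erase.2 ⟨hoa, ho⟩) o' (Finset.mem_erase.2 ⟨ho'a, ho'⟩) hl]

theorem exists_gaps_of_acyclic (hI : ∀ o ∈ V, (I o).1 < (I o).2)
    (hacyc : ∀ o, ¬ Relation.TransGen (IntervalCutEdge V ℓ I) o o) :
    ∃ g : ℕ → ℕ, (∀ t, 0 < g t) ∧
      ∀ o ∈ V, ∀ o' ∈ V, ℓ o = ℓ o' → weight g (I o) = weight g (I o') := by
  induction V using Finset.strongInduction with
  | H V ih =>
    rcases V.eq_empty_or_nonempty with rfl | hV
    · exact ⟨fun _ => 1, fun _ => one_pos, by simp⟩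
    obtain ⟨a, ha, hsink⟩ := exists_forall_not_rel_of_acyclic hacyc hV
    obtain ⟨g, hg, hgV⟩ := ih (V.erase a) (Finset.erase_ssubset ha)
      (fun o ho => hI o (Finset.mem_of_mem_erase ho))
      (fun o h => hacyc o (Relation.TransGen.mono (IntervalCutEdge.mono (V.erase_subset a)) o o h))
    exact exists_gaps_of_erase ha hI hsink hg hgV

theorem exists_label_weights_of_acyclic (hI : ∀ o ∈ V, (I o).1 < (I o).2)
    (hacyc : ∀ o, ¬ Relation.TransGen (IntervalCutEdge V ℓ I) o o) :
    ∃ (g : ℕ → ℕ) (w : β → ℕ), (∀ t, 0 < g t) ∧ (∀ x, 0 < w x) ∧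
      ∀ o ∈ V, weight g (I o) = w (ℓ o) := by
  obtain ⟨g, hg, hgV⟩ := exists_gaps_of_acyclic hI hacyc
  refine ⟨g, fun x => if h : ∃ o ∈ V, ℓ o = x then weight g (I h.choose) else 1, hg,
    fun x => ?_, fun o ho => ?_⟩ <;> dsimp only
  · split_ifs with h
    exacts [weight_pos hg (hI _ h.choose_spec.1), one_pos]
  · have h : ∃ o' ∈ V, ℓ o' = ℓ o := ⟨o, ho, rfl⟩
    rw [dif_pos h]
    exact hgV o ho _ h.choose_spec.1 h.choose_spec.2.symm

end LabelledIntervals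

lemma exists_walk_of_transGen {ι : Type*} {E : ι → ι → Prop} {a b : ι}
    (h : Relation.TransGen E a b) :
    ∃ (n : ℕ) (w : ℕ → ι), 0 < n ∧ w 0 = a ∧ w n = b ∧ ∀ k < n, E (w k) (w (k + 1)) := by
  induction h using Relation.TransGen.head_induction_on with
  | @single a hab => exact ⟨1, fun k => if k = 0 then a else b, one_pos, rfl, rfl, by simpa⟩
  | @head a c hac _ ih =>
    obtain ⟨n, w, -, hw0, hwn, hw⟩ := ih
    refine ⟨n + 1, fun k => Nat.casesOn k a w, n.succ_pos, rfl, hwn, fun k hk => ?_⟩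
    cases k with
    | zero => simpa [hw0] using hac
    | succ k => exact hw k (by omega)

lemma not_transGen_cutEdge_of_acyclic {α : Type*} {U₁ U₂ : List α} {lt : BRel}
    (hacyc : Acyclic U₁ U₂ lt) (o : ℕ × ℕ) : ¬ Relation.TransGen (CutEdge U₁ U₂ lt) o o := fun h =>
  let ⟨n, w, hn, hw0, hwn, hw⟩ := exists_walk_of_transGen h
  hacyc ⟨n, w, hn, hwn.trans hw0.symm, hw⟩

section Boundaries

variable {α : Type*} {U₁ U₂ : List α} {lt : BRel} {a b c : ℕ × ℕ}

lemma Boundary.eBoundary (hb : Boundary U₁ U₂ b) : EBoundary U₁ U₂ b := ⟨hb.1, hb.2.2⟩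

lemma Boundary.eBoundary_pred (hb : Boundary U₁ U₂ b) : EBoundary U₁ U₂ (b.1, b.2 - 1) :=
  ⟨hb.1, (Nat.sub_le _ _).trans hb.2.2⟩

noncomputable def extBoundaries (U₁ U₂ : List α) : Finset (ℕ × ℕ) :=
  (Finset.Icc 1 2 ×ˢ Finset.range (U₁.length + U₂.length + 1)).filter (EBoundary U₁ U₂)

lemma mem_extBoundaries : b ∈ extBoundaries U₁ U₂ ↔ EBoundary U₁ U₂ b := by
  have : (word U₁ U₂ b.1).length ≤ U₁.length + U₂.length := by
    unfold word; split_ifs <;> omega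
  simp only [extBoundaries, Finset.mem_filter, Finset.mem_product, Finset.mem_Icc,
    Finset.mem_range, and_iff_right_iff_imp]
  rintro ⟨h1 | h1, h2⟩ <;> omega

noncomputable def boundaries (U₁ U₂ : List α) : Finset (ℕ × ℕ) :=
  (extBoundaries U₁ U₂).filter (Boundary U₁ U₂)

lemma mem_boundaries : b ∈ boundaries U₁ U₂ ↔ Boundary U₁ U₂ b := by
  simp only [boundaries, Finset.mem_filter, mem_extBoundaries, and_iff_right_iff_imp]
  exact Boundary.eBoundary

noncomputable def rank (U₁ U₂ : List α) (lt : BRel) (b : ℕ × ℕ) : ℕ :=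
  ((extBoundaries U₁ U₂).filter (lt · b)).card

noncomputable def rankInterval (U₁ U₂ : List α) (lt : BRel) (b : ℕ × ℕ) : ℕ × ℕ :=
  (rank U₁ U₂ lt (b.1, b.2 - 1), rank U₁ U₂ lt b)

namespace BoundaryOrder

lemma lt_or_lt (hbo : BoundaryOrder U₁ U₂ lt) (ha : EBoundary U₁ U₂ a)
    (hb : EBoundary U₁ U₂ b) (hc : EBoundary U₁ U₂ c) (hac : lt a c) : lt a b ∨ lt b c := by
  by_contra! ⟨hab, hbc⟩
  have hba : ¬ lt b a := fun h => hbc (hbo.trans _ _ _ hb ha hc h hac)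
  have hcb : ¬ lt c b := fun h => hab (hbo.trans _ _ _ ha hc hb hac h)
  exact (hbo.incomp_trans a b c ha hb hc ⟨hab, hba⟩ ⟨hbc, hcb⟩).1 hac

lemma rank_lt_rank_iff (hbo : BoundaryOrder U₁ U₂ lt) (ha : EBoundary U₁ U₂ a)
    (hb : EBoundary U₁ U₂ b) :
    rank U₁ U₂ lt a < rank U₁ U₂ lt b ↔ lt a b := by
  constructor
  · intro h
    by_contra hab
    refine h.not_ge (Finset.card_le_card fun c hc => ?_)
    simp only [Finset.mem_filter, mem_extBoundaries] at hc ⊢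
    exact ⟨hc.1, (hbo.lt_or_lt hc.1 ha hb hc.2).resolve_right hab⟩
  · intro hab
    refine Finset.card_lt_card ((Finset.ssubset_iff_of_subset fun c hc => ?_).2 ⟨a, ?_, ?_⟩)
    · simp only [Finset.mem_filter, mem_extBoundaries] at hc ⊢
      exact ⟨hc.1, hbo.trans _ _ _ hc.1 ha hb hc.2 hab⟩
    · exact Finset.mem_filter.2 ⟨mem_extBoundaries.2 ha, hab⟩
    · exact fun h => hbo.irrefl a ha (Finset.mem_filter.1 h).2

lemma rank_eq_of_incomp (hbo : BoundaryOrder U₁ U₂ lt) (ha : EBoundary U₁ U₂ a)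
    (hb : EBoundary U₁ U₂ b) (hab : Incomp lt a b) : rank U₁ U₂ lt a = rank U₁ U₂ lt b := by
  have h₁ := (hbo.rank_lt_rank_iff ha hb).not.2 hab.1
  have h₂ := (hbo.rank_lt_rank_iff hb ha).not.2 hab.2
  omega

lemma rankInterval_fst_lt_snd (hbo : BoundaryOrder U₁ U₂ lt) (hb : Boundary U₁ U₂ b) :
    (rankInterval U₁ U₂ lt b).1 < (rankInterval U₁ U₂ lt b).2 := by
  obtain ⟨i, j⟩ := b
  obtain ⟨hi, hj, hjl⟩ := hb
  obtain ⟨j, rfl⟩ : ∃ k, j = k + 1 := ⟨j - 1, by omega⟩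
  show rank U₁ U₂ lt (i, j) < rank U₁ U₂ lt (i, j + 1)
  exact (hbo.rank_lt_rank_iff (a := (i, j)) ⟨hi, Nat.le_of_succ_le hjl⟩ ⟨hi, hjl⟩).2
    (hbo.succ i j ⟨hi, hjl⟩)

lemma rank_bot (hbo : BoundaryOrder U₁ U₂ lt) {i : ℕ} (hi : i = 1 ∨ i = 2) :
    rank U₁ U₂ lt (i, 0) = rank U₁ U₂ lt (1, 0) := by
  rcases hi with rfl | rfl
  · rfl
  · exact (hbo.rank_eq_of_incomp ⟨Or.inl rfl, Nat.zero_le _⟩ ⟨Or.inr rfl, Nat.zero_le _⟩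
      hbo.bot).symm

lemma rank_bot_le (hbo : BoundaryOrder U₁ U₂ lt) (hb : EBoundary U₁ U₂ b) :
    rank U₁ U₂ lt (1, 0) ≤ rank U₁ U₂ lt b := by
  obtain ⟨i, j⟩ := b
  induction j with
  | zero => exact (hbo.rank_bot hb.1).ge
  | succ j ih =>
    have hj : EBoundary U₁ U₂ (i, j) := ⟨hb.1, Nat.le_of_succ_le hb.2⟩
    exact (ih hj).trans (hbo.rank_lt_rank_iff hj hb |>.2 (hbo.succ i j hb)).le

lemma cutEdge_of_intervalCutEdge (hbo : BoundaryOrder U₁ U₂ lt) :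
    IntervalCutEdge (boundaries U₁ U₂) (letter U₁ U₂) (rankInterval U₁ U₂ lt) ≤
      CutEdge U₁ U₂ lt := by
  rintro a b ⟨ha, hb, c, hc, hac, hlo, hhi, hl, hI⟩
  rw [mem_boundaries] at ha hb hc
  refine ⟨c, ⟨ha, hc, hac, (hbo.rank_lt_rank_iff ha.eBoundary_pred hc.eBoundary).1 hlo,
    (hbo.rank_lt_rank_iff hc.eBoundary_pred ha.eBoundary).1 hhi⟩, hc, hb, hl, ?_⟩
  by_contra! h
  exact hI (Prod.ext (hbo.rank_eq_of_incomp hc.eBoundary_pred hb.eBoundary_pred h.2)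
    (hbo.rank_eq_of_incomp hc.eBoundary hb.eBoundary h.1))

lemma prefixLen_eq_weight (hbo : BoundaryOrder U₁ U₂ lt) {g : ℕ → ℕ} {L : α → ℕ}
    (hL : ∀ b, Boundary U₁ U₂ b → ∀ x, letter U₁ U₂ b = some x →
      weight g (rankInterval U₁ U₂ lt b) = L x)
    (hb : EBoundary U₁ U₂ b) :
    prefixLen U₁ U₂ L b = weight g (rank U₁ U₂ lt (1, 0), rank U₁ U₂ lt b) := by
  obtain ⟨i, j⟩ := b
  induction j with
  | zero => simp [prefixLen, weight, hbo.rank_bot hb.1]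
  | succ j ih =>
    have hj : j < (word U₁ U₂ i).length := hb.2
    have hletter : letter U₁ U₂ (i, j + 1) = some (word U₁ U₂ i)[j] :=
      List.getElem?_eq_getElem hj
    have hsucc : prefixLen U₁ U₂ L (i, j + 1) =
        prefixLen U₁ U₂ L (i, j) + L (word U₁ U₂ i)[j] := by
      show (((word U₁ U₂ i).take (j + 1)).map L).sum = (((word U₁ U₂ i).take j).map L).sum + _
      simp only [List.take_add_one, List.getElem?_eq_getElem hj, Option.toList_some,
        List.map_append, List.sum_append, List.map_cons, List.map_nil, List.sum_cons,
        List.sum_nil, add_zero]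
    rw [hsucc, ih ⟨hb.1, hj.le⟩, ← hL (i, j + 1) ⟨hb.1, by omega, hb.2⟩ _ hletter]
    exact Finset.sum_Ioc_consecutive g (hbo.rank_bot_le ⟨hb.1, hj.le⟩)
      (hbo.rankInterval_fst_lt_snd (b := (i, j + 1)) ⟨hb.1, by omega, hb.2⟩).le

end BoundaryOrder

end Boundaries

/-- **Proposition.** If the cut graph of an extended word equation is acyclic,
then the extended word equation is coherent. -/
theorem coherent_of_acyclic_cut_graph (U₁ U₂ : List X) (lt : BRel)
    (hbo : BoundaryOrder U₁ U₂ lt) (hacyc : Acyclic U₁ U₂ lt) :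
    Coherent U₁ U₂ lt := by
  obtain ⟨g, w, hg, hw, hgw⟩ := exists_label_weights_of_acyclic
    (fun b hb => hbo.rankInterval_fst_lt_snd (mem_boundaries.1 hb))
    (fun o h => not_transGen_cutEdge_of_acyclic hacyc o
      (Relation.TransGen.mono hbo.cutEdge_of_intervalCutEdge o o h))
  have hL : ∀ b, Boundary U₁ U₂ b → ∀ x, letter U₁ U₂ b = some x →
      weight g (rankInterval U₁ U₂ lt b) = w (some x) := fun b hb x hx => by
    rw [← hx]
    exact hgw b (mem_boundaries.2 hb)
  refine ⟨fun x => w (some x), fun x => hw _, fun a b ha hb => ?_⟩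
  rw [hbo.prefixLen_eq_weight hL ha.eBoundary, hbo.prefixLen_eq_weight hL hb.eBoundary,
    weight_lt_weight_iff hg (hbo.rank_bot_le ha.eBoundary),
    hbo.rank_lt_rank_iff ha.eBoundary hb.eBoundary]

end ExtWordEq
end

section
/- Suppose (U'₁,U'₂,<') is the result of applying a case I coherent extended Nielsen transformation to a coherent extended word equation (U₁,U₂,<). If the cut graph G_{U₁,U₂,<} is acyclic, then so is the cut graph G_{U'₁,U'₂,<'}. -/
open scoped Classical

namespace ExtWordEq

variable {X : Type*}

variable [DecidableEq X]

section Aux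

variable {U₁ U₂ : List X} {lt : BRel}

lemma lt_of_incomp_of_lt (hbo : BoundaryOrder U₁ U₂ lt) {a b c : ℕ × ℕ}
    (ha : EBoundary U₁ U₂ a) (hb' : EBoundary U₁ U₂ b) (hc : EBoundary U₁ U₂ c)
    (h : Incomp lt a b) (h2 : lt b c) : lt a c := by
  by_contra hac
  have hca : ¬ lt c a := fun hca => h.2 (hbo.trans b c a hb' hc ha h2 hca)
  exact (hbo.incomp_trans b a c hb' ha hc ⟨h.2, h.1⟩ ⟨hac, hca⟩).1 h2

lemma sum_take_lt (L : X → ℕ) (hL : ∀ z, 0 < L z) (w : List X) {j j' : ℕ}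
    (hjj' : j < j') (hj' : j' ≤ w.length) :
    ((w.take j).map L).sum < ((w.take j').map L).sum := by
  have hsplit : w.take j' = w.take j ++ (w.drop j).take (j' - j) := by
    rw [← List.take_add]; congr 1; omega
  rw [hsplit, List.map_append, List.sum_append]
  have hlt : 0 < ((w.drop j).take (j' - j)).length := by
    rw [List.length_take, List.length_drop]; omega
  have hmapne : ((w.drop j).take (j' - j)).map L ≠ [] := by
    simp only [ne_eq, List.map_eq_nil_iff]
    exact List.length_pos_iff.mp hlt
  have hpos : 0 < (((w.drop j).take (j' - j)).map L).sum := by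
    refine List.sum_pos _ ?_ hmapne
    intro z hz
    obtain ⟨u, _, rfl⟩ := List.mem_map.mp hz
    exact hL u
  omega

lemma bot_lt (hbo : BoundaryOrder U₁ U₂ lt) (hcoh : Coherent U₁ U₂ lt)
    (h₁ : U₁ ≠ []) (h₂ : U₂ ≠ [])
    {b : ℕ × ℕ} (hB : Boundary U₁ U₂ b) (i : ℕ) (hi : i = 1 ∨ i = 2) : lt (i, 0) b := by
  obtain ⟨bi, bj⟩ := b
  obtain ⟨L, hL, hiff⟩ := hcoh
  obtain ⟨hside0, hb10, hb20⟩ := hB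
  have hside : bi = 1 ∨ bi = 2 := hside0
  have hb1 : 1 ≤ bj := hb10
  have hb2 : bj ≤ (word U₁ U₂ bi).length := hb20
  have hwne : word U₁ U₂ bi ≠ [] := by
    rcases hside with h | h <;> rw [h]
    · simpa [word] using h₁
    · simpa [word] using h₂
  have hlen1 : 1 ≤ (word U₁ U₂ bi).length := List.length_pos_iff.mpr hwne
  have hEB0 : ∀ k : ℕ, k = 1 ∨ k = 2 → EBoundary U₁ U₂ (k, 0) := fun k hk => ⟨hk, Nat.zero_le _⟩
  have hEB1 : EBoundary U₁ U₂ (bi, 1) := ⟨hside, hlen1⟩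
  have hEBb : EBoundary U₁ U₂ (bi, bj) := ⟨hside, hb2⟩
  have hstep : lt (bi, 0) (bi, bj) := by
    have hsucc := hbo.succ bi 0 hEB1
    rcases eq_or_lt_of_le hb1 with h | h
    · rw [← h]; exact hsucc
    · have hB1 : Boundary U₁ U₂ (bi, 1) := ⟨hside, le_refl _, hlen1⟩
      have h1b : lt (bi, 1) (bi, bj) := by
        refine (hiff (bi, 1) (bi, bj) hB1 ⟨hside, hb1, hb2⟩).mpr ?_
        show (((word U₁ U₂ bi).take 1).map L).sum < (((word U₁ U₂ bi).take bj).map L).sum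
        exact sum_take_lt L hL _ h hb2
      exact hbo.trans _ _ _ (hEB0 bi hside) hEB1 hEBb hsucc h1b
  rcases eq_or_ne i bi with rfl | hne
  · exact hstep
  · have hbot : Incomp lt (i, 0) (bi, 0) := by
      rcases hi with rfl | rfl <;> rcases hside with h | h
      · exact absurd h (Ne.symm hne)
      · rw [h]; exact hbo.bot
      · rw [h]; exact ⟨hbo.bot.2, hbo.bot.1⟩
      · exact absurd h (Ne.symm hne)
    exact lt_of_incomp_of_lt hbo (hEB0 i hi) (hEB0 bi hside) hEBb hbot hstep

lemma walk_concat {m₁ m₂ : ℕ} {w₁ w₂ : ℕ → ℕ × ℕ}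
    (hm : 0 < m₁) (hjoin : w₁ m₁ = w₂ 0)
    (he1 : ∀ k < m₁, CutEdge U₁ U₂ lt (w₁ k) (w₁ (k + 1)))
    (he2 : ∀ k < m₂, CutEdge U₁ U₂ lt (w₂ k) (w₂ (k + 1))) :
    ∃ w : ℕ → ℕ × ℕ, w 0 = w₁ 0 ∧ w (m₁ + m₂) = w₂ m₂ ∧
      ∀ k < m₁ + m₂, CutEdge U₁ U₂ lt (w k) (w (k + 1)) := by
  refine ⟨fun k => if k < m₁ then w₁ k else w₂ (k - m₁), by simp [hm], ?_, ?_⟩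
  · have h : ¬ m₁ + m₂ < m₁ := by omega
    simp only [h, if_false]
    congr 1
    omega
  · intro k hk
    by_cases h1 : k + 1 < m₁
    · have h0 : k < m₁ := by omega
      simp only [if_pos h0, if_pos h1]
      exact he1 k h0
    · by_cases h0 : k < m₁
      · have hk1 : k + 1 = m₁ := by omega
        simp only [if_pos h0, if_neg h1]
        rw [show k + 1 - m₁ = 0 from by omega, ← hjoin, ← hk1]
        exact he1 k h0
      · simp only [if_neg h0, if_neg h1]
        rw [show k + 1 - m₁ = (k - m₁) + 1 from by omega]
        exact he2 _ (by omega)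

end Aux

/-- **Lemma.** A case I coherent extended Nielsen transformation preserves
acyclicity of the cut graph. -/
theorem acyclic_preserved_caseI (U₁ U₂ U₁' U₂' : List X) (lt lt' : BRel)
    (h₁ : U₁ ≠ []) (h₂ : U₂ ≠ []) (hbo : BoundaryOrder U₁ U₂ lt)
    (hcoh : Coherent U₁ U₂ lt)
    (hI : NielsenI U₁ U₂ lt U₁' U₂' lt') (hcoh' : Coherent U₁' U₂' lt')
    (hacyc : Acyclic U₁ U₂ lt) :
    Acyclic U₁' U₂' lt' := by
  obtain ⟨x, y, hx, hy, hinc, hU1', hU2', hbo', hiff⟩ := hI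
  set T : X → X := fun z => if z = y then x else z with hT
  rintro ⟨n, w', hn, hclose, hedges⟩
  apply hacyc
  have hwne : ∀ k : ℕ, k = 1 ∨ k = 2 → word U₁ U₂ k ≠ [] := by
    rintro k (rfl | rfl)
    · simpa [word] using h₁
    · simpa [word] using h₂
  have hword' : ∀ k : ℕ, k = 1 ∨ k = 2 → word U₁' U₂' k = ((word U₁ U₂ k).map T).tail := by
    rintro k (rfl | rfl) <;> simp [word, hU1', hU2']
  have hlen : ∀ k : ℕ, k = 1 ∨ k = 2 →
      (word U₁' U₂' k).length + 1 = (word U₁ U₂ k).length := by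
    intro k hk
    have h0 : 0 < (word U₁ U₂ k).length := List.length_pos_iff.mpr (hwne k hk)
    rw [hword' k hk, List.length_tail, List.length_map]
    omega
  have hBmap : ∀ p : ℕ × ℕ, Boundary U₁' U₂' p → Boundary U₁ U₂ (p.1, p.2 + 1) := by
    rintro ⟨i, j⟩ ⟨hs, hj1, hj2⟩
    have hs' : i = 1 ∨ i = 2 := hs
    have hj2' : j ≤ (word U₁' U₂' i).length := hj2
    have h3 : j + 1 ≤ (word U₁ U₂ i).length := by have := hlen i hs'; omega
    exact ⟨hs', Nat.le_add_left 1 j, h3⟩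
  have hEB : ∀ p : ℕ × ℕ, Boundary U₁' U₂' p → EBoundary U₁' U₂' p := fun p h => ⟨h.1, h.2.2⟩
  have hEBpred : ∀ p : ℕ × ℕ, Boundary U₁' U₂' p → EBoundary U₁' U₂' (p.1, p.2 - 1) :=
    fun p h => ⟨h.1, le_trans (Nat.sub_le _ _) h.2.2⟩
  have hletter : ∀ i j : ℕ, (i = 1 ∨ i = 2) → 1 ≤ j →
      letter U₁' U₂' (i, j) = (letter U₁ U₂ (i, j + 1)).map T := by
    intro i j hi hj
    show (word U₁' U₂' i)[j - 1]? = ((word U₁ U₂ i)[j + 1 - 1]?).map T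
    rw [hword' i hi, List.getElem?_tail, List.getElem?_map,
      show j - 1 + 1 = j from by omega]
    rfl
  have hbot1 : ∀ b, Boundary U₁ U₂ b → lt (1, 0) b :=
    fun b hB => bot_lt hbo hcoh h₁ h₂ hB 1 (Or.inl rfl)
  have hbot2 : ∀ b, Boundary U₁ U₂ b → lt (2, 0) b :=
    fun b hB => bot_lt hbo hcoh h₁ h₂ hB 2 (Or.inr rfl)
  have hB11 : Boundary U₁ U₂ (1, 1) :=
    ⟨Or.inl rfl, le_refl _, List.length_pos_iff.mpr (hwne 1 (Or.inl rfl))⟩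
  have hB21 : Boundary U₁ U₂ (2, 1) :=
    ⟨Or.inr rfl, le_refl _, List.length_pos_iff.mpr (hwne 2 (Or.inr rfl))⟩
  have hl11 : letter U₁ U₂ (1, 1) = some x := by
    show U₁[0]? = some x
    rw [← List.head?_eq_getElem?]
    exact hx
  have hl21 : letter U₁ U₂ (2, 1) = some y := by
    show U₂[0]? = some y
    rw [← List.head?_eq_getElem?]
    exact hy
  have hstep : ∀ a' b' : ℕ × ℕ, CutEdge U₁' U₂' lt' a' b' →
      ∃ m, ∃ w : ℕ → ℕ × ℕ, 0 < m ∧ w 0 = (a'.1, a'.2 + 1) ∧ w m = (b'.1, b'.2 + 1) ∧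
        ∀ k < m, CutEdge U₁ U₂ lt (w k) (w (k + 1)) := by
    rintro ⟨ai, aj⟩ ⟨bi, bj⟩
      ⟨⟨ci, cj⟩, ⟨hBa', hBc', hne', hlt1', hlt2'⟩, hBc'2, hBb', hlet', hor'⟩
    have haj : 1 ≤ aj := hBa'.2.1
    have hcj : 1 ≤ cj := hBc'.2.1
    have hbj : 1 ≤ bj := hBb'.2.1
    have hBA : Boundary U₁ U₂ (ai, aj + 1) := hBmap _ hBa'
    have hBC : Boundary U₁ U₂ (ci, cj + 1) := hBmap _ hBc'
    have hBB : Boundary U₁ U₂ (bi, bj + 1) := hBmap _ hBb'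
    have hlenC : cj + 1 ≤ (word U₁ U₂ ci).length := hBC.2.2
    have hlenB : bj + 1 ≤ (word U₁ U₂ bi).length := hBB.2.2
    have hltAC : lt (ai, aj) (ci, cj + 1) := by
      have h2 : lt (ai, aj - 1 + 1) (ci, cj + 1) :=
        (hiff (ai, aj - 1) (ci, cj) (hEBpred _ hBa') (hEB _ hBc')).mp hlt1'
      rwa [show aj - 1 + 1 = aj from by omega] at h2
    have hltCA : lt (ci, cj) (ai, aj + 1) := by
      have h2 : lt (ci, cj - 1 + 1) (ai, aj + 1) :=
        (hiff (ci, cj - 1) (ai, aj) (hEBpred _ hBc') (hEB _ hBa')).mp hlt2'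
      rwa [show cj - 1 + 1 = cj from by omega] at h2
    have hCut : Cuts U₁ U₂ lt (ai, aj + 1) (ci, cj + 1) := by
      refine ⟨hBA, hBC, ?_, hltAC, hltCA⟩
      intro h
      injection h with e1 e2
      apply hne'
      have e3 : aj = cj := by omega
      rw [e1, e3]
    obtain ⟨zC, hzC⟩ : ∃ z, letter U₁ U₂ (ci, cj + 1) = some z :=
      ⟨_, List.getElem?_eq_getElem (show cj + 1 - 1 < (word U₁ U₂ ci).length by omega)⟩
    obtain ⟨zB, hzB⟩ : ∃ z, letter U₁ U₂ (bi, bj + 1) = some z :=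
      ⟨_, List.getElem?_eq_getElem (show bj + 1 - 1 < (word U₁ U₂ bi).length by omega)⟩
    have hTlet : (letter U₁ U₂ (ci, cj + 1)).map T = (letter U₁ U₂ (bi, bj + 1)).map T := by
      rw [← hletter ci cj hBc'.1 hcj, ← hletter bi bj hBb'.1 hbj]
      exact hlet'
    rw [hzC, hzB] at hTlet
    have hTzz : T zC = T zB := by simpa using hTlet
    by_cases hzz : zC = zB
    · -- letters genuinely equal: direct edge
      have hMir : Mirrors U₁ U₂ lt (ci, cj + 1) (bi, bj + 1) := by
        refine ⟨hBC, hBB, by rw [hzC, hzB, hzz], ?_⟩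
        rcases hor' with h | h
        · left
          intro hI2
          refine h ⟨fun hl => hI2.1 ?_, fun hl => hI2.2 ?_⟩
          · exact (hiff (ci, cj) (bi, bj) (hEB _ hBc') (hEB _ hBb')).mp hl
          · exact (hiff (bi, bj) (ci, cj) (hEB _ hBb') (hEB _ hBc')).mp hl
        · right
          intro hI2
          refine h ⟨fun hl => hI2.1 ?_, fun hl => hI2.2 ?_⟩
          · have h3 : lt (ci, cj - 1 + 1) (bi, bj - 1 + 1) :=
              (hiff (ci, cj - 1) (bi, bj - 1) (hEBpred _ hBc') (hEBpred _ hBb')).mp hl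
            rwa [show cj - 1 + 1 = cj from by omega, show bj - 1 + 1 = bj from by omega] at h3
          · have h3 : lt (bi, bj - 1 + 1) (ci, cj - 1 + 1) :=
              (hiff (bi, bj - 1) (ci, cj - 1) (hEBpred _ hBb') (hEBpred _ hBc')).mp hl
            rwa [show cj - 1 + 1 = cj from by omega, show bj - 1 + 1 = bj from by omega] at h3
      refine ⟨1, fun k => if k = 0 then (ai, aj + 1) else (bi, bj + 1), Nat.one_pos, rfl, rfl, ?_⟩
      intro k hk
      have hk0 : k = 0 := by omega
      subst hk0
      exact ⟨(ci, cj + 1), hCut, hMir⟩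
    · -- letters are x and y in some order: reroute through (1,1)/(2,1)
      have hBCpred : Boundary U₁ U₂ (ci, cj) := ⟨hBc'.1, hcj, Nat.le_trans (Nat.le_succ cj) hlenC⟩
      have hBBpred : Boundary U₁ U₂ (bi, bj) := ⟨hBb'.1, hbj, Nat.le_trans (Nat.le_succ bj) hlenB⟩
      have hxy : (zC = y ∧ zB = x) ∨ (zC = x ∧ zB = y) := by
        by_cases hc1 : zC = y
        · by_cases hb1 : zB = y
          · exact absurd (hc1.trans hb1.symm) hzz
          · simp only [hT, hc1, hb1, if_pos rfl, if_neg hb1, if_true] at hTzz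
            exact Or.inl ⟨hc1, hTzz.symm⟩
        · by_cases hb1 : zB = y
          · simp only [hT, hc1, hb1, if_neg hc1, if_pos rfl] at hTzz
            exact Or.inr ⟨hTzz, hb1⟩
          · simp only [hT, if_neg hc1, if_neg hb1] at hTzz
            exact absurd hTzz hzz
      rcases hxy with ⟨hCy, hBx⟩ | ⟨hCx, hBy⟩
      · -- route A → (2,1) → B
        have hMir1 : Mirrors U₁ U₂ lt (ci, cj + 1) (2, 1) :=
          ⟨hBC, hB21, by rw [hzC, hl21, hCy],
            Or.inr (fun hI2 => hI2.2 (hbot2 (ci, cj) hBCpred))⟩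
        have hMir2 : Mirrors U₁ U₂ lt (1, 1) (bi, bj + 1) :=
          ⟨hB11, hBB, by rw [hl11, hzB, hBx],
            Or.inr (fun hI2 => hI2.1 (hbot1 (bi, bj) hBBpred))⟩
        have hc21 : Cuts U₁ U₂ lt (2, 1) (1, 1) :=
          ⟨hB21, hB11, by decide, hbot2 _ hB11, hbot1 _ hB21⟩
        have hE1 : CutEdge U₁ U₂ lt (ai, aj + 1) (2, 1) := ⟨_, hCut, hMir1⟩
        have hE2 : CutEdge U₁ U₂ lt (2, 1) (bi, bj + 1) := ⟨(1, 1), hc21, hMir2⟩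
        refine ⟨2, fun k => if k = 0 then (ai, aj + 1) else if k = 1 then (2, 1)
          else (bi, bj + 1), Nat.zero_lt_two, rfl, rfl, ?_⟩
        intro k hk
        match k, hk with
        | 0, _ => exact hE1
        | 1, _ => exact hE2
      · -- route A → (1,1) → B
        have hMir1 : Mirrors U₁ U₂ lt (ci, cj + 1) (1, 1) :=
          ⟨hBC, hB11, by rw [hzC, hl11, hCx],
            Or.inr (fun hI2 => hI2.2 (hbot1 (ci, cj) hBCpred))⟩
        have hMir2 : Mirrors U₁ U₂ lt (2, 1) (bi, bj + 1) :=
          ⟨hB21, hBB, by rw [hl21, hzB, hBy],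
            Or.inr (fun hI2 => hI2.1 (hbot2 (bi, bj) hBBpred))⟩
        have hc12 : Cuts U₁ U₂ lt (1, 1) (2, 1) :=
          ⟨hB11, hB21, by decide, hbot1 _ hB21, hbot2 _ hB11⟩
        have hE1 : CutEdge U₁ U₂ lt (ai, aj + 1) (1, 1) := ⟨_, hCut, hMir1⟩
        have hE2 : CutEdge U₁ U₂ lt (1, 1) (bi, bj + 1) := ⟨(2, 1), hc12, hMir2⟩
        refine ⟨2, fun k => if k = 0 then (ai, aj + 1) else if k = 1 then (1, 1)
          else (bi, bj + 1), Nat.zero_lt_two, rfl, rfl, ?_⟩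
        intro k hk
        match k, hk with
        | 0, _ => exact hE1
        | 1, _ => exact hE2
  have hwalk : ∀ j : ℕ, 1 ≤ j → j ≤ n → ∃ m, ∃ w : ℕ → ℕ × ℕ, 0 < m ∧
      w 0 = ((w' 0).1, (w' 0).2 + 1) ∧ w m = ((w' j).1, (w' j).2 + 1) ∧
      ∀ k < m, CutEdge U₁ U₂ lt (w k) (w (k + 1)) := by
    intro j
    induction j with
    | zero => omega
    | succ j ih =>
      intro _ hjn
      rcases Nat.eq_zero_or_pos j with rfl | hj
      · exact hstep _ _ (hedges 0 (by omega))
      · obtain ⟨m₁, w₁, hm₁, hw₁0, hw₁m, he₁⟩ := ih hj (by omega)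
        obtain ⟨m₂, w₂, hm₂, hw₂0, hw₂m, he₂⟩ := hstep _ _ (hedges j (by omega))
        obtain ⟨w, hw0, hwm, he⟩ := walk_concat hm₁ (hw₁m.trans hw₂0.symm) he₁ he₂
        exact ⟨m₁ + m₂, w, by omega, hw0.trans hw₁0, hwm.trans hw₂m, he⟩
  obtain ⟨m, w, hm, hw0, hwm, he⟩ := hwalk n hn (le_refl n)
  exact ⟨m, w, hm, by rw [hwm, hclose, hw0], he⟩


end ExtWordEq
end

section
/- Suppose (U'₁,U'₂,<') is the result of applying a case I coherent extended Nielsen transformation to a coherent extended word equation (U₁,U₂,<) whose cut graph G_{U₁,U₂,<} is acyclic. Then for every boundary (i,j) ∈ B' of (U'₁,U'₂), the fecundity satisfies f_{U'₁,U'₂,<'}(i,j) ≤ f_{U₁,U₂,<}(i,j+1). -/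
/-!
Induction on `f (i, j + 1)`. Write `b⁺ = (i, j + 1)` for a boundary `b = (i, j)` of the new
equation. If `b` cuts `c` then `b⁺` cuts `c⁺`, and if `c` mirrors `d` then `c⁺` mirrors `d⁺`,
unless `T` has identified the two distinct letters `x = U_{1,1}` and `y = U_{2,1}` sitting at
`c⁺` and `d⁺`. In that exceptional case let `o` be the head boundary `(1,1)` or `(2,1)` carrying
the letter of `c⁺`: then `c⁺` mirrors `o`, while `o` cuts the other head, which mirrors every
exceptional `d⁺`. So the exceptional `d⁺` together have fecundity below `f o`, and `o` is a term
of the mirror sum of `c⁺` that no `d⁺` occupies. Hence the mirror sum of `c` in the new equation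
is dominated by that of `c⁺` in the old one, and the recursion for `f'` by that for `f`.
-/

open scoped Classical

namespace ExtWordEq

variable {X : Type*}

variable [DecidableEq X]

/-- The finite set of boundaries of `(U₁, U₂)`. -/
def boundaryFinset (U₁ U₂ : List X) : Finset (ℕ × ℕ) :=
  ((Finset.range U₁.length).image fun j => (1, j + 1)) ∪
    ((Finset.range U₂.length).image fun j => (2, j + 1))

/-- `f` is the fecundity function of `(U₁, U₂, lt)`: on every boundary `b`,
`f b = 1 + max over boundaries c cut by b of (sum over boundaries d mirrored by c of f d)`. -/
def IsFecundity (U₁ U₂ : List X) (lt : BRel) (f : ℕ × ℕ → ℕ) : Prop :=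
  ∀ b ∈ boundaryFinset U₁ U₂,
    f b = 1 + ((boundaryFinset U₁ U₂).filter fun c => Cuts U₁ U₂ lt b c).sup
      fun c => ((boundaryFinset U₁ U₂).filter fun d => Mirrors U₁ U₂ lt c d).sum f

def shift (b : ℕ × ℕ) : ℕ × ℕ := (b.1, b.2 + 1)

theorem shift_injective : Function.Injective shift := by
  rintro ⟨i, j⟩ ⟨i', j'⟩ h
  simp_all [shift]

theorem shift_pred {b : ℕ × ℕ} (hb : 1 ≤ b.2) : shift (b.1, b.2 - 1) = b := by
  obtain ⟨i, j⟩ := b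
  simp only [shift, Prod.mk.injEq, true_and]
  omega

theorem _root_.Finset.sum_le_sum_of_subset_union {β M : Type*} [DecidableEq β] [AddCommMonoid M]
    [PartialOrder M] [IsOrderedAddMonoid M] [CanonicallyOrderedAdd M]
    {A t u : Finset β} {f : β → M} {o : β}
    (ho : o ∈ t) (hoA : o ∉ A) (hA : A ⊆ t ∪ u) (hu : ∑ b ∈ u, f b ≤ f o) :
    ∑ b ∈ A, f b ≤ ∑ b ∈ t, f b :=
  calc ∑ b ∈ A, f b = ∑ b ∈ A with b ∈ t, f b + ∑ b ∈ A with b ∉ t, f b :=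
        (Finset.sum_filter_add_sum_filter_not _ _ _).symm
    _ ≤ ∑ b ∈ t.erase o, f b + ∑ b ∈ u, f b := by
        gcongr
        · intro a ha
          obtain ⟨ha, hat⟩ := Finset.mem_filter.1 ha
          exact Finset.mem_erase.2 ⟨ne_of_mem_of_not_mem ha hoA, hat⟩
        · intro a ha
          obtain ⟨ha, hat⟩ := Finset.mem_filter.1 ha
          exact (Finset.mem_union.1 (hA ha)).resolve_left hat
    _ ≤ ∑ b ∈ t.erase o, f b + f o := by gcongr
    _ = ∑ b ∈ t, f b := Finset.sum_erase_add _ _ ho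

section
omit [DecidableEq X]

variable {U₁ U₂ : List X} {lt : BRel}

theorem mem_boundaryFinset {b : ℕ × ℕ} : b ∈ boundaryFinset U₁ U₂ ↔ Boundary U₁ U₂ b := by
  obtain ⟨i, j⟩ := b
  simp only [boundaryFinset, Boundary, word, Finset.mem_union, Finset.mem_image,
    Finset.mem_range, Prod.mk.injEq]
  constructor
  · rintro (⟨k, hk, rfl, rfl⟩ | ⟨k, hk, rfl, rfl⟩) <;> simp <;> omega
  · rintro ⟨rfl | rfl, h1, h2⟩
    · exact Or.inl ⟨j - 1, by simp at h2; omega, rfl, by omega⟩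
    · exact Or.inr ⟨j - 1, by simp at h2; omega, rfl, by omega⟩

theorem Incomp.symm {a b : ℕ × ℕ} (h : Incomp lt a b) : Incomp lt b a := ⟨h.2, h.1⟩

theorem Cuts.symm {a b : ℕ × ℕ} (h : Cuts U₁ U₂ lt a b) : Cuts U₁ U₂ lt b a :=
  ⟨h.2.1, h.1, h.2.2.1.symm, h.2.2.2.2, h.2.2.2.1⟩

theorem Mirrors.symm {a b : ℕ × ℕ} (h : Mirrors U₁ U₂ lt a b) : Mirrors U₁ U₂ lt b a :=
  ⟨h.2.1, h.1, h.2.2.1.symm, h.2.2.2.imp (mt Incomp.symm) (mt Incomp.symm)⟩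

theorem Boundary.exists_letter_eq_some {b : ℕ × ℕ} (hb : Boundary U₁ U₂ b) :
    ∃ z, letter U₁ U₂ b = some z :=
  ⟨_, List.getElem?_eq_getElem (by have := hb.2; omega)⟩

namespace BoundaryOrder

variable (hbo : BoundaryOrder U₁ U₂ lt)
include hbo

theorem lt_of_incomp_of_lt {a b c : ℕ × ℕ} (ha : EBoundary U₁ U₂ a) (hb : EBoundary U₁ U₂ b)
    (hc : EBoundary U₁ U₂ c) (hab : Incomp lt a b) (hac : lt a c) : lt b c := by
  by_contra hbc
  by_cases hcb : lt c b
  · exact hab.1 (hbo.trans a c b ha hc hb hac hcb)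
  · exact (hbo.incomp_trans a b c ha hb hc hab ⟨hbc, hcb⟩).1 hac

theorem lt_zero_succ {i : ℕ} : ∀ {j : ℕ}, EBoundary U₁ U₂ (i, j + 1) → lt (i, 0) (i, j + 1)
  | 0, h => hbo.succ i 0 h
  | j + 1, h => by
    have h' : EBoundary U₁ U₂ (i, j + 1) := ⟨h.1, by have := h.2; dsimp at this ⊢; omega⟩
    exact hbo.trans _ _ _ ⟨h.1, Nat.zero_le _⟩ h' h (lt_zero_succ h') (hbo.succ i (j + 1) h)

theorem zero_lt {i : ℕ} {e : ℕ × ℕ} (hi : i = 1 ∨ i = 2) (he : EBoundary U₁ U₂ e)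
    (he1 : 1 ≤ e.2) : lt (i, 0) e := by
  obtain ⟨i', j⟩ := e
  obtain ⟨j, rfl⟩ : ∃ k, j = k + 1 := ⟨j - 1, by dsimp at he1; omega⟩
  have hbot : Incomp lt (i', 0) (i, 0) := by
    have hself : ∀ k, EBoundary U₁ U₂ (k, 0) → Incomp lt (k, 0) (k, 0) :=
      fun k hk => ⟨hbo.irrefl _ hk, hbo.irrefl _ hk⟩
    rcases hi with rfl | rfl <;> rcases he.1 with rfl | rfl
    exacts [hself 1 ⟨Or.inl rfl, Nat.zero_le _⟩, hbo.bot.symm, hbo.bot,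
      hself 2 ⟨Or.inr rfl, Nat.zero_le _⟩]
  exact hbo.lt_of_incomp_of_lt (a := (i', 0)) ⟨he.1, Nat.zero_le _⟩ ⟨hi, Nat.zero_le _⟩ he hbot
    (hbo.lt_zero_succ he)

theorem cuts_heads (h₁ : U₁ ≠ []) (h₂ : U₂ ≠ []) : Cuts U₁ U₂ lt (1, 1) (2, 1) := by
  have hB₁ : Boundary U₁ U₂ (1, 1) := ⟨Or.inl rfl, le_rfl, List.length_pos_iff.2 h₁⟩
  have hB₂ : Boundary U₁ U₂ (2, 1) := ⟨Or.inr rfl, le_rfl, List.length_pos_iff.2 h₂⟩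
  exact ⟨hB₁, hB₂, by decide, hbo.zero_lt (Or.inl rfl) ⟨hB₂.1, hB₂.2.2⟩ le_rfl,
    hbo.zero_lt (Or.inr rfl) ⟨hB₁.1, hB₁.2.2⟩ le_rfl⟩

theorem mirrors_head {i : ℕ} {e : ℕ × ℕ} (hi : Boundary U₁ U₂ (i, 1)) (he : Boundary U₁ U₂ e)
    (he2 : 2 ≤ e.2) (hlet : letter U₁ U₂ (i, 1) = letter U₁ U₂ e) :
    Mirrors U₁ U₂ lt (i, 1) e :=
  ⟨hi, he, hlet, Or.inr fun h =>
    h.1 (hbo.zero_lt hi.1 ⟨he.1, (Nat.sub_le _ _).trans he.2.2⟩ (Nat.le_sub_of_add_le he2))⟩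

end BoundaryOrder

theorem IsFecundity.sum_mirrors_lt {f : ℕ × ℕ → ℕ} (hf : IsFecundity U₁ U₂ lt f)
    {b c : ℕ × ℕ} (hbc : Cuts U₁ U₂ lt b c) :
    ∑ d ∈ boundaryFinset U₁ U₂ with Mirrors U₁ U₂ lt c d, f d < f b := by
  rw [hf b (mem_boundaryFinset.2 hbc.1), Nat.lt_one_add_iff]
  exact Finset.le_sup (f := fun c => ∑ d ∈ boundaryFinset U₁ U₂ with Mirrors U₁ U₂ lt c d, f d)
    (Finset.mem_filter.2 ⟨mem_boundaryFinset.2 hbc.2.1, hbc⟩)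

theorem BoundaryOrder.sum_le_sum_mirrors_of_head (hbo : BoundaryOrder U₁ U₂ lt)
    {f : ℕ × ℕ → ℕ} (hf : IsFecundity U₁ U₂ lt f) {i₀ i₁ : ℕ}
    (hcut : Cuts U₁ U₂ lt (i₀, 1) (i₁, 1)) {e : ℕ × ℕ} (he : Boundary U₁ U₂ e) (he2 : 2 ≤ e.2)
    (hlet : letter U₁ U₂ (i₀, 1) = letter U₁ U₂ e) {A : Finset (ℕ × ℕ)}
    (hA : ∀ a ∈ A, Boundary U₁ U₂ a ∧ 2 ≤ a.2 ∧
      (Mirrors U₁ U₂ lt e a ∨ letter U₁ U₂ (i₁, 1) = letter U₁ U₂ a)) :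
    ∑ a ∈ A, f a ≤ ∑ d ∈ boundaryFinset U₁ U₂ with Mirrors U₁ U₂ lt e d, f d := by
  refine Finset.sum_le_sum_of_subset_union (o := (i₀, 1))
    (u := boundaryFinset U₁ U₂ |>.filter (Mirrors U₁ U₂ lt (i₁, 1)))
    (Finset.mem_filter.2 ⟨mem_boundaryFinset.2 hcut.1,
      (hbo.mirrors_head hcut.1 he he2 hlet).symm⟩)
    (fun h => Nat.not_succ_le_self 1 (hA _ h).2.1) (fun a ha => ?_) (hf.sum_mirrors_lt hcut).le
  obtain ⟨haB, ha2, hmir | hlet'⟩ := hA a ha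
  · exact Finset.mem_union_left _ (Finset.mem_filter.2 ⟨mem_boundaryFinset.2 haB, hmir⟩)
  · exact Finset.mem_union_right _
      (Finset.mem_filter.2 ⟨mem_boundaryFinset.2 haB, hbo.mirrors_head hcut.2.1 haB ha2 hlet'⟩)

/-- The half of the defining property `(i,j) <' (i',j') ↔ (i,j+1) < (i',j'+1)` of the case I
order that the argument needs. -/
def ShiftMonotone (V₁ V₂ : List X) (lt' lt : BRel) : Prop :=
  ∀ a b, EBoundary V₁ V₂ a → EBoundary V₁ V₂ b → lt' a b → lt (shift a) (shift b)

theorem ShiftMonotone.incomp {V₁ V₂ : List X} {lt' : BRel} (hmono : ShiftMonotone V₁ V₂ lt' lt)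
    {a b : ℕ × ℕ} (ha : EBoundary V₁ V₂ a) (hb : EBoundary V₁ V₂ b)
    (h : Incomp lt (shift a) (shift b)) : Incomp lt' a b :=
  ⟨mt (hmono a b ha hb) h.1, mt (hmono b a hb ha) h.2⟩

section MapTail

variable {g : X → X} {lt' : BRel}

theorem word_map_tail (i : ℕ) :
    word (U₁.map g).tail (U₂.map g).tail i = ((word U₁ U₂ i).map g).tail := by
  unfold word
  split_ifs <;> rfl

theorem Boundary.shift_of_map_tail {b : ℕ × ℕ} (hb : Boundary (U₁.map g).tail (U₂.map g).tail b) :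
    Boundary U₁ U₂ (shift b) := by
  obtain ⟨hi, h1, h2⟩ := hb
  rw [word_map_tail, List.length_tail, List.length_map] at h2
  exact ⟨hi, Nat.le_add_left 1 _, by simp only [shift]; omega⟩

theorem letter_map_tail {b : ℕ × ℕ} (hb : 1 ≤ b.2) :
    letter (U₁.map g).tail (U₂.map g).tail b = (letter U₁ U₂ (shift b)).map g := by
  simp only [letter, shift, word_map_tail, List.getElem?_tail, List.getElem?_map,
    Nat.sub_add_cancel hb, Nat.add_sub_cancel]

theorem Cuts.shift_of_map_tail (hmono : ShiftMonotone (U₁.map g).tail (U₂.map g).tail lt' lt)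
    {b c : ℕ × ℕ} (h : Cuts (U₁.map g).tail (U₂.map g).tail lt' b c) :
    Cuts U₁ U₂ lt (shift b) (shift c) := by
  obtain ⟨hb, hc, hne, hbc, hcb⟩ := h
  have hbc' := hmono (b.1, b.2 - 1) c ⟨hb.1, (Nat.sub_le _ _).trans hb.2.2⟩ ⟨hc.1, hc.2.2⟩ hbc
  have hcb' := hmono (c.1, c.2 - 1) b ⟨hc.1, (Nat.sub_le _ _).trans hc.2.2⟩ ⟨hb.1, hb.2.2⟩ hcb
  rw [shift_pred hb.2.1] at hbc'
  rw [shift_pred hc.2.1] at hcb'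
  exact ⟨hb.shift_of_map_tail, hc.shift_of_map_tail, shift_injective.ne hne, hbc', hcb'⟩

theorem Mirrors.shift_of_map_tail (hmono : ShiftMonotone (U₁.map g).tail (U₂.map g).tail lt' lt)
    {c d : ℕ × ℕ} (h : Mirrors (U₁.map g).tail (U₂.map g).tail lt' c d)
    (hlet : letter U₁ U₂ (shift c) = letter U₁ U₂ (shift d)) :
    Mirrors U₁ U₂ lt (shift c) (shift d) := by
  obtain ⟨hc, hd, -, hne | hne⟩ := h
  · exact ⟨hc.shift_of_map_tail, hd.shift_of_map_tail, hlet,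
      Or.inl (mt (hmono.incomp ⟨hc.1, hc.2.2⟩ ⟨hd.1, hd.2.2⟩) hne)⟩
  · refine ⟨hc.shift_of_map_tail, hd.shift_of_map_tail, hlet, Or.inr fun hinc => hne ?_⟩
    refine hmono.incomp ⟨hc.1, (Nat.sub_le _ _).trans hc.2.2⟩
      ⟨hd.1, (Nat.sub_le _ _).trans hd.2.2⟩ ?_
    rwa [shift_pred hc.2.1, shift_pred hd.2.1]

end MapTail

end

/-- The endomorphism `T` of case I, with `T(y) = x`. -/
def caseIMap (x y : X) (z : X) : X := if z = y then x else z

theorem eq_or_of_caseIMap_eq {x y z w : X} (h : caseIMap x y z = caseIMap x y w) :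
    z = w ∨ (z = x ∧ w = y) ∨ (z = y ∧ w = x) := by
  unfold caseIMap at h
  split_ifs at h <;> simp_all

section CaseI

variable {U₁ U₂ : List X} {lt lt' : BRel} {x y : X}

theorem Mirrors.shift_of_caseI
    (hmono : ShiftMonotone (U₁.map (caseIMap x y)).tail (U₂.map (caseIMap x y)).tail lt' lt)
    {c d : ℕ × ℕ} (h : Mirrors (U₁.map (caseIMap x y)).tail (U₂.map (caseIMap x y)).tail lt' c d) :
    Mirrors U₁ U₂ lt (shift c) (shift d) ∨
      (letter U₁ U₂ (shift c) = some x ∧ letter U₁ U₂ (shift d) = some y) ∨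
      (letter U₁ U₂ (shift c) = some y ∧ letter U₁ U₂ (shift d) = some x) := by
  by_cases hlet : letter U₁ U₂ (shift c) = letter U₁ U₂ (shift d)
  · exact Or.inl (h.shift_of_map_tail hmono hlet)
  obtain ⟨z, hz⟩ := h.1.shift_of_map_tail.exists_letter_eq_some
  obtain ⟨w, hw⟩ := h.2.1.shift_of_map_tail.exists_letter_eq_some
  have hT := h.2.2.1
  rw [letter_map_tail h.1.2.1, letter_map_tail h.2.1.2.1, hz, hw] at hT
  rw [hz, hw] at hlet ⊢
  rcases eq_or_of_caseIMap_eq (Option.some.inj hT) with rfl | ⟨rfl, rfl⟩ | ⟨rfl, rfl⟩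
  · exact absurd rfl hlet
  · exact Or.inr (Or.inl ⟨rfl, rfl⟩)
  · exact Or.inr (Or.inr ⟨rfl, rfl⟩)

theorem BoundaryOrder.sum_mirrors_shift_le (hbo : BoundaryOrder U₁ U₂ lt) {f : ℕ × ℕ → ℕ}
    (hf : IsFecundity U₁ U₂ lt f) (hx : U₁.head? = some x) (hy : U₂.head? = some y)
    (hmono : ShiftMonotone (U₁.map (caseIMap x y)).tail (U₂.map (caseIMap x y)).tail lt' lt)
    {c : ℕ × ℕ} (hc : Boundary (U₁.map (caseIMap x y)).tail (U₂.map (caseIMap x y)).tail c) :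
    ∑ d ∈ boundaryFinset (U₁.map (caseIMap x y)).tail (U₂.map (caseIMap x y)).tail with
        Mirrors (U₁.map (caseIMap x y)).tail (U₂.map (caseIMap x y)).tail lt' c d, f (shift d) ≤
      ∑ d ∈ boundaryFinset U₁ U₂ with Mirrors U₁ U₂ lt (shift c) d, f d := by
  rw [← Finset.sum_image shift_injective.injOn]
  have himage : ∀ a ∈ Finset.image shift (boundaryFinset (U₁.map (caseIMap x y)).tail
      (U₂.map (caseIMap x y)).tail |>.filter
        (Mirrors (U₁.map (caseIMap x y)).tail (U₂.map (caseIMap x y)).tail lt' c)),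
      Boundary U₁ U₂ a ∧ 2 ≤ a.2 ∧ (Mirrors U₁ U₂ lt (shift c) a ∨
        (letter U₁ U₂ (shift c) = some x ∧ letter U₁ U₂ a = some y) ∨
        (letter U₁ U₂ (shift c) = some y ∧ letter U₁ U₂ a = some x)) := by
    intro a ha
    obtain ⟨d, hd, rfl⟩ := Finset.mem_image.1 ha
    have hmir := (Finset.mem_filter.1 hd).2
    exact ⟨hmir.2.1.shift_of_map_tail, Nat.succ_le_succ hmir.2.1.2.1, hmir.shift_of_caseI hmono⟩
  have hcuts :=
    hbo.cuts_heads (List.isSome_head?.1 (by simp [hx])) (List.isSome_head?.1 (by simp [hy]))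
  have hlet₁ : letter U₁ U₂ (1, 1) = some x := List.head?_eq_getElem?.symm.trans hx
  have hlet₂ : letter U₁ U₂ (2, 1) = some y := List.head?_eq_getElem?.symm.trans hy
  have hcB := hc.shift_of_map_tail
  have hc2 : 2 ≤ (shift c).2 := Nat.succ_le_succ hc.2.1
  by_cases hcx : letter U₁ U₂ (shift c) = some x
  · refine hbo.sum_le_sum_mirrors_of_head hf hcuts hcB hc2 (hlet₁.trans hcx.symm)
      fun a ha => ?_
    obtain ⟨haB, ha2, h | ⟨-, hay⟩ | ⟨hcy, hax⟩⟩ := himage a ha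
    exacts [⟨haB, ha2, Or.inl h⟩, ⟨haB, ha2, Or.inr (hlet₂.trans hay.symm)⟩,
      ⟨haB, ha2, Or.inr (by rw [hlet₂, hax, ← hcx, hcy])⟩]
  by_cases hcy : letter U₁ U₂ (shift c) = some y
  · refine hbo.sum_le_sum_mirrors_of_head hf hcuts.symm hcB hc2 (hlet₂.trans hcy.symm)
      fun a ha => ?_
    obtain ⟨haB, ha2, h | ⟨hcx', -⟩ | ⟨-, hax⟩⟩ := himage a ha
    exacts [⟨haB, ha2, Or.inl h⟩, absurd hcx' hcx, ⟨haB, ha2, Or.inr (hlet₁.trans hax.symm)⟩]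
  refine Finset.sum_le_sum_of_subset fun a ha => ?_
  obtain ⟨haB, -, h | ⟨hcx', -⟩ | ⟨hcy', -⟩⟩ := himage a ha
  exacts [Finset.mem_filter.2 ⟨mem_boundaryFinset.2 haB, h⟩, absurd hcx' hcx, absurd hcy' hcy]

theorem BoundaryOrder.fecundity_le_shift (hbo : BoundaryOrder U₁ U₂ lt) {f f' : ℕ × ℕ → ℕ}
    (hf : IsFecundity U₁ U₂ lt f)
    (hf' : IsFecundity (U₁.map (caseIMap x y)).tail (U₂.map (caseIMap x y)).tail lt' f')
    (hx : U₁.head? = some x) (hy : U₂.head? = some y)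
    (hmono : ShiftMonotone (U₁.map (caseIMap x y)).tail (U₂.map (caseIMap x y)).tail lt' lt)
    {b : ℕ × ℕ} (hb : Boundary (U₁.map (caseIMap x y)).tail (U₂.map (caseIMap x y)).tail b) :
    f' b ≤ f (shift b) := by
  induction hn : f (shift b) using Nat.strong_induction_on generalizing b with
  | _ n ih =>
  have hpos : 0 < n := by
    rw [← hn, hf _ (mem_boundaryFinset.2 hb.shift_of_map_tail)]
    omega
  rw [hf' b (mem_boundaryFinset.2 hb), add_comm, Nat.add_one_le_iff, Finset.sup_lt_iff hpos]
  intro c hc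
  have hbc := (Finset.mem_filter.1 hc).2
  have hsum := hbo.sum_mirrors_shift_le hf hx hy hmono hbc.2.1
  have hlt := hn ▸ hf.sum_mirrors_lt (hbc.shift_of_map_tail hmono)
  calc _ ≤ ∑ d ∈ _ with _, f (shift d) := Finset.sum_le_sum fun d hd =>
        ih _ ((Finset.single_le_sum (fun _ _ => Nat.zero_le _) hd).trans hsum |>.trans_lt hlt)
          (Finset.mem_filter.1 hd).2.2.1 rfl
    _ < n := hsum.trans_lt hlt

end CaseI

theorem fecundity_le_caseI_general (U₁ U₂ U₁' U₂' : List X) (lt lt' : BRel)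
    (hbo : BoundaryOrder U₁ U₂ lt)
    (hI : NielsenI U₁ U₂ lt U₁' U₂' lt')
    (f f' : ℕ × ℕ → ℕ)
    (hf : IsFecundity U₁ U₂ lt f) (hf' : IsFecundity U₁' U₂' lt' f') :
    ∀ b, Boundary U₁' U₂' b → f' b ≤ f (b.1, b.2 + 1) := by
  obtain ⟨x, y, hx, hy, -, rfl, rfl, -, hlt'⟩ := hI
  intro b hb
  exact hbo.fecundity_le_shift hf hf' hx hy (fun a c ha hc => (hlt' a c ha hc).1) hb

/-- **Lemma.** After a case I coherent extended Nielsen transformation of an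
extended word equation with acyclic cut graph, the fecundity of every new boundary
`(i,j)` is at most the fecundity of the old boundary `(i,j+1)`. -/
theorem fecundity_le_caseI (U₁ U₂ U₁' U₂' : List X) (lt lt' : BRel)
    (h₁ : U₁ ≠ []) (h₂ : U₂ ≠ []) (hbo : BoundaryOrder U₁ U₂ lt)
    (hcoh : Coherent U₁ U₂ lt)
    (hI : NielsenI U₁ U₂ lt U₁' U₂' lt') (hcoh' : Coherent U₁' U₂' lt')
    (hacyc : Acyclic U₁ U₂ lt)
    (f f' : ℕ × ℕ → ℕ)
    (hf : IsFecundity U₁ U₂ lt f) (hf' : IsFecundity U₁' U₂' lt' f') :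
    ∀ b, Boundary U₁' U₂' b → f' b ≤ f (b.1, b.2 + 1) :=
  fecundity_le_caseI_general U₁ U₂ U₁' U₂' lt lt' hbo hI f f' hf hf'

end ExtWordEq
end
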